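/- Let K ≥ 2 and, for k = 1,…,K, let λ_k^∞ > 0, y_k^∞ ∈ ℝ⁵, ε_k ∈ {−1,1} and ℓ_k ∈ ℝ⁵ with |ℓ_k| < 1, such that ℓ_k ≠ ℓ_m whenever k ≠ m; let C₀ > 1. For each k, suppose v^{(k)} : [1,∞) × ℝ⁵ → ℝ is smooth and satisfies, for every δ' ∈ (0,1) and m ∈ {0,1}, with A_{ℓ_k} = ∂ₜ + ℓ_k·∇: |A_{ℓ_k}^m v^{(k)}(t,x)| ≤ C(δ',m)(t + ⟨ζ_{ℓ_k}(t,x)⟩)^{−1} t^{−(1+m)} ⟨ζ_{ℓ_k}(t,x)⟩^{−2+δ'} and |A_{ℓ_k}^m ∇v^{(k)}(t,x)| ≤ C(δ',m)(t + ⟨ζ_{ℓ_k}(t,x)⟩)^{−1} t^{−(1+m)} ⟨ζ_{ℓ_k}(t,x)⟩^{−3+δ'}. Then for every δ ∈ (0,1) there exist C > 0 and T₁ ≥ 1 such that for any interval I ⊂ [T₁,∞), any C¹ functions λ_k, y_k on I with |λ_k(t) − λ_k^∞| + |y_k(t) − y_k^∞| ≤ C₀ t^{−1}, the functions 𝐖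 = Σ_k (W_k + c_k v_k) and 𝐗 = Σ_k (−ℓ_k·∇W_k + c_k z_k) satisfy, for all t ∈ I and x ∈ ℝ⁵: |𝐖| ≤ C(q³ + t^{−1}q^{3−δ}), |𝐗| ≤ C(q⁴ + t^{−2}q^{3−δ}), and |∇𝐖 − Σ_k ∇W_k| + |𝐗 + Σ_k ℓ_k·∇W_k| ≤ C t^{−2} q^{3−δ}. -/

import Mathlib

noncomputable section

open Real Filter MeasureTheory Set Classical
open scoped BigOperators Topology

abbrev E5 := EuclideanSpace ℝ (Fin 5)

def Wfun (x : E5) : ℝ := (1 + ‖x‖ ^ 2 / 15) ^ (-(3 : ℝ) / 2)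

def Wl (l : E5) (x : E5) : ℝ :=
  if l = 0 then Wfun x
  else Wfun (x + (((1 - ‖l‖ ^ 2) ^ (-(1 : ℝ) / 2) - 1) * ((inner ℝ l x : ℝ) / ‖l‖ ^ 2)) • l)

def dt {F : Type*} [NormedAddCommGroup F] [NormedSpace ℝ F]
    (u : ℝ → E5 → F) (t : ℝ) (x : E5) : F :=
  deriv (fun s => u s x) t

/-- Japanese bracket `⟨z⟩ = (1+|z|²)^{1/2}`. -/
def jap (z : E5) : ℝ := (1 + ‖z‖ ^ 2) ^ ((1 : ℝ) / 2)

/-- `ζ_ℓ(t,x)`. -/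
def zeta (l : E5) (t : ℝ) (x : E5) : E5 :=
  if l = 0 then x
  else x - t • l +
    (((1 - ‖l‖ ^ 2) ^ (-(1 : ℝ) / 2) - 1) * ((inner ℝ l (x - t • l) : ℝ) / ‖l‖ ^ 2)) • l

/-- The transport operator `A_ℓ = ∂ₜ + ℓ·∇`. -/
def Al {F : Type*} [NormedAddCommGroup F] [NormedSpace ℝ F]
    (l : E5) (v : ℝ → E5 → F) : ℝ → E5 → F :=
  fun t x => deriv (fun s => v s x) t + fderiv ℝ (fun y => v t y) x l

/-- `ΛW = (3/2)W + x·∇W`. -/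
def LamW (x : E5) : ℝ := (3 / 2 : ℝ) * Wfun x + fderiv ℝ Wfun x x

/-- `κ_ℓ`. -/
def kappal (l : E5) : ℝ :=
  -(1 - ‖l‖ ^ 2) * (∫ x : E5, Wfun x ^ ((4 : ℝ) / 3) * LamW x) / (∫ x : E5, (LamW x) ^ 2)

/-- Modulated soliton `W_k`. -/
def Wk {K : ℕ} (lam : Fin K → ℝ → ℝ) (y : Fin K → ℝ → E5) (eps : Fin K → ℝ)
    (l : Fin K → E5) (k : Fin K) (t : ℝ) (x : E5) : ℝ :=
  eps k * (lam k t) ^ (-(3 : ℝ) / 2) * Wl (l k) ((lam k t)⁻¹ • (x - t • l k - y k t))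

/-- `σ_{k,m}`. -/
def sigkm {K : ℕ} (l : Fin K → E5) (k m : Fin K) : E5 :=
  if l m = 0 then l k - l m
  else l k - l m +
    (((1 - ‖l m‖ ^ 2) ^ (-(1 : ℝ) / 2) - 1) * ((inner ℝ (l m) (l k - l m) : ℝ) / ‖l m‖ ^ 2)) • l m

/-- `c_k`. -/
def ck {K : ℕ} (lamI : Fin K → ℝ) (eps : Fin K → ℝ) (l : Fin K → E5) (k : Fin K) : ℝ :=
  (7 / 3 : ℝ) * (15 : ℝ) ^ ((3 : ℝ) / 2) *
    ∑ m ∈ Finset.univ.erase k, eps m * (lamI m) ^ ((3 : ℝ) / 2) * ‖sigkm l k m‖ ^ (-(3 : ℝ))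

/-- `q_k(t,x)`. -/
def qk {K : ℕ} (l : Fin K → E5) (yI : Fin K → E5) (k : Fin K) (t : ℝ) (x : E5) : ℝ :=
  (1 + ‖x - t • l k - yI k‖ ^ 2) ^ (-(1 : ℝ) / 2)

/-- `q = Σ_k q_k`. -/
def qsum {K : ℕ} (l : Fin K → E5) (yI : Fin K → E5) (t : ℝ) (x : E5) : ℝ :=
  ∑ k, qk l yI k t x

/-- `v_k(t,x) = λ_k(t)^{-3} v^{(k)}(t/λ_k(t), (x-y_k(t))/λ_k(t))`. -/
def vkF {K : ℕ} (v : Fin K → ℝ → E5 → ℝ) (lam : Fin K → ℝ → ℝ) (y : Fin K → ℝ → E5)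
    (k : Fin K) (t : ℝ) (x : E5) : ℝ :=
  (lam k t) ^ (-(3 : ℝ)) * v k (t / lam k t) ((lam k t)⁻¹ • (x - y k t))

/-- `Λ_k W_k(t,x) = (3/2)W_k + (x - ℓ_k t - y_k(t))·∇W_k`. -/
def LamkWk {K : ℕ} (lam : Fin K → ℝ → ℝ) (y : Fin K → ℝ → E5) (eps : Fin K → ℝ)
    (l : Fin K → E5) (k : Fin K) (t : ℝ) (x : E5) : ℝ :=
  (3 / 2 : ℝ) * Wk lam y eps l k t x +
    fderiv ℝ (fun z => Wk lam y eps l k t z) x (x - t • l k - y k t)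

/-- `z_k(t,x)`. -/
def zkF {K : ℕ} (v : Fin K → ℝ → E5 → ℝ) (lam : Fin K → ℝ → ℝ) (y : Fin K → ℝ → E5)
    (eps : Fin K → ℝ) (l : Fin K → E5) (k : Fin K) (t : ℝ) (x : E5) : ℝ :=
  (lam k t) ^ (-(4 : ℝ)) * dt (v k) (t / lam k t) ((lam k t)⁻¹ • (x - y k t)) +
    (kappal (l k) * eps k / (2 * (lam k t) ^ ((1 : ℝ) / 2) * t ^ 2)) *
      LamkWk lam y eps l k t x

/-- The refined approximate solution `𝐖 = Σ_k (W_k + c_k v_k)`. -/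
def bW {K : ℕ} (lamI : Fin K → ℝ) (v : Fin K → ℝ → E5 → ℝ) (lam : Fin K → ℝ → ℝ)
    (y : Fin K → ℝ → E5) (eps : Fin K → ℝ) (l : Fin K → E5) (t : ℝ) (x : E5) : ℝ :=
  ∑ k, (Wk lam y eps l k t x + ck lamI eps l k * vkF v lam y k t x)

/-- `𝐗 = Σ_k (-ℓ_k·∇W_k + c_k z_k)`. -/
def bX {K : ℕ} (lamI : Fin K → ℝ) (v : Fin K → ℝ → E5 → ℝ) (lam : Fin K → ℝ → ℝ)
    (y : Fin K → ℝ → E5) (eps : Fin K → ℝ) (l : Fin K → E5) (t : ℝ) (x : E5) : ℝ :=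
  ∑ k, (-(fderiv ℝ (fun z => Wk lam y eps l k t z) x (l k)) +
    ck lamI eps l k * zkF v lam y eps l k t x)

/-- The Lorentz linear map. -/
def Tl (l : E5) : E5 →L[ℝ] E5 :=
  ContinuousLinearMap.id ℝ E5 +
    ((((1 - ‖l‖ ^ 2) ^ (-(1 : ℝ) / 2) - 1) / ‖l‖ ^ 2) : ℝ) •
      (innerSL ℝ l).smulRight l

lemma Tl_apply (l x : E5) :
    Tl l x = x + (((1 - ‖l‖ ^ 2) ^ (-(1 : ℝ) / 2) - 1) * ((inner ℝ l x : ℝ) / ‖l‖ ^ 2)) • l := by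
  simp only [Tl, ContinuousLinearMap.add_apply, ContinuousLinearMap.id_apply,
    ContinuousLinearMap.smul_apply, ContinuousLinearMap.smulRight_apply, innerSL_apply_apply]
  rw [smul_smul]
  ring_nf

lemma Wl_eq (l x : E5) : Wl l x = Wfun (Tl l x) := by
  by_cases h : l = 0
  · subst h
    simp [Wl, Tl_apply]
  · rw [Wl, if_neg h, Tl_apply]

lemma zeta_eq (l : E5) (t : ℝ) (x : E5) : zeta l t x = Tl l (x - t • l) := by
  by_cases h : l = 0
  · subst h; simp [zeta, Tl_apply]
  · rw [zeta, if_neg h, Tl_apply]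

lemma coef_nonneg {l : E5} (hl : ‖l‖ < 1) : 0 ≤ (1 - ‖l‖ ^ 2) ^ (-(1 : ℝ) / 2) - 1 := by
  have h1 : 0 < 1 - ‖l‖ ^ 2 := by nlinarith [norm_nonneg l]
  have h2 : 1 - ‖l‖ ^ 2 ≤ 1 := by nlinarith [norm_nonneg l]
  have h3 : (1:ℝ) ≤ (1 - ‖l‖ ^ 2) ^ (-(1 : ℝ) / 2) :=
    Real.one_le_rpow_of_pos_of_le_one_of_nonpos h1 h2 (by norm_num)
  linarith

lemma norm_add_smul_ge (x l : E5) {c : ℝ} (hc : 0 ≤ c) :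
    ‖x‖ ≤ ‖x + (c * ((inner ℝ l x : ℝ) / ‖l‖ ^ 2)) • l‖ := by
  set a : ℝ := c * ((inner ℝ l x : ℝ) / ‖l‖ ^ 2) with ha
  have key : ‖x + a • l‖ ^ 2 = ‖x‖ ^ 2 + 2 * (a * (inner ℝ l x : ℝ)) + a ^ 2 * ‖l‖ ^ 2 := by
    rw [norm_add_sq_real, real_inner_smul_right, real_inner_comm, norm_smul]
    simp [mul_pow]
  have hmid : 0 ≤ a * (inner ℝ l x : ℝ) := by
    rcases eq_or_ne (‖l‖) 0 with h0 | h0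
    · simp [ha, h0]
    · have h5 : a * (inner ℝ l x : ℝ) = c * ((inner ℝ l x : ℝ))^2 / ‖l‖^2 := by rw [ha]; ring
      rw [h5]
      positivity
  nlinarith [norm_nonneg (x + a • l), norm_nonneg x, sq_nonneg a, sq_nonneg ‖l‖]

lemma Tl_norm_ge (l : E5) (hl : ‖l‖ < 1) (x : E5) : ‖x‖ ≤ ‖Tl l x‖ := by
  rw [Tl_apply]
  exact norm_add_smul_ge x l (coef_nonneg hl)

lemma rpow_transfer {M a b p : ℝ} (hM : 0 < M) (ha : 0 < a) (hb : 0 < b)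
    (h : a ≤ M * b) (hp : p ≤ 0) : b ^ p ≤ M ^ (-p) * a ^ p := by
  have h1 : a ^ p ≥ (M * b) ^ p := Real.rpow_le_rpow_of_nonpos ha h hp
  have h2 : (M * b) ^ p = M ^ p * b ^ p := Real.mul_rpow hM.le hb.le
  have h3 : 0 < M ^ (-p) := Real.rpow_pos_of_pos hM _
  have h4 : M ^ (-p) * M ^ p = 1 := by
    rw [← Real.rpow_add hM]; simp
  calc b ^ p = M ^ (-p) * (M ^ p * b ^ p) := by rw [← mul_assoc, h4, one_mul]
  _ ≤ M ^ (-p) * a ^ p := by rw [← h2]; exact mul_le_mul_of_nonneg_left h1 h3.le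

lemma norm_gradient_eq (f : E5 → ℝ) (x : E5) : ‖gradient f x‖ = ‖fderiv ℝ f x‖ := by
  rw [gradient]
  exact LinearIsometryEquiv.norm_map _ _

lemma sq_le_one_add_sq (u : ℝ) : u ≤ (1 + u ^ 2) ^ ((1:ℝ)/2) := by
  rcases le_or_gt u 0 with h | h
  · exact h.trans (Real.rpow_nonneg (by positivity) _)
  · have h1 : u = (u ^ 2) ^ ((1:ℝ)/2) := by
      rw [← Real.rpow_natCast u 2, ← Real.rpow_mul h.le]
      norm_num
    calc u = (u ^ 2) ^ ((1:ℝ)/2) := h1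
      _ ≤ (1 + u ^ 2) ^ ((1:ℝ)/2) :=
        Real.rpow_le_rpow (sq_nonneg u) (by linarith) (by norm_num)

lemma Wfun_hasFDerivAt (x : E5) :
    HasFDerivAt Wfun
      (((-(3:ℝ)/2) * (1 + ‖x‖ ^ 2 / 15) ^ (-(3:ℝ)/2 - 1) * (2/15)) • innerSL ℝ x) x := by
  have hsq : HasFDerivAt (fun y : E5 => ‖y‖ ^ 2) (2 • innerSL ℝ x) x :=
    (hasStrictFDerivAt_norm_sq x).hasFDerivAt
  have hn : HasFDerivAt (fun y : E5 => 1 + ‖y‖ ^ 2 / 15)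
      ((15:ℝ)⁻¹ • (2 • innerSL ℝ x)) x := by
    have h2 := (hsq.const_smul (15:ℝ)⁻¹).const_add 1
    have hfe : (fun y : E5 => 1 + ‖y‖ ^ 2 / 15)
        = (fun y : E5 => 1 + (15:ℝ)⁻¹ • ‖y‖ ^ 2) := by
      funext y; simp [smul_eq_mul]; ring
    rw [hfe]; exact h2
  have hb : (0:ℝ) < 1 + ‖x‖ ^ 2 / 15 := by positivity
  have hp : HasDerivAt (fun u : ℝ => u ^ (-(3:ℝ)/2))
      ((-(3:ℝ)/2) * (1 + ‖x‖ ^ 2 / 15) ^ (-(3:ℝ)/2 - 1)) (1 + ‖x‖ ^ 2 / 15) :=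
    Real.hasDerivAt_rpow_const (Or.inl hb.ne')
  have hc := hp.comp_hasFDerivAt x hn
  have hW : Wfun = fun y : E5 => (1 + ‖y‖ ^ 2 / 15) ^ (-(3:ℝ)/2) := rfl
  rw [hW]
  refine hc.congr_fderiv ?_
  ext y
  simp only [ContinuousLinearMap.smul_apply, ContinuousLinearMap.coe_smul',
    Pi.smul_apply, smul_eq_mul, innerSL_apply_apply]
  ring_nf

lemma Wfun_nonneg (x : E5) : 0 ≤ Wfun x := Real.rpow_nonneg (by positivity) _

lemma Wfun_le (x : E5) : Wfun x ≤ 15 ^ ((3:ℝ)/2) * (1 + ‖x‖ ^ 2) ^ (-(3:ℝ)/2) := by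
  have h := rpow_transfer (M := 15) (a := 1 + ‖x‖ ^ 2) (b := 1 + ‖x‖ ^ 2 / 15)
    (p := -(3:ℝ)/2) (by norm_num) (by positivity) (by positivity)
    (by nlinarith [sq_nonneg ‖x‖]) (by norm_num)
  rw [show -(-(3:ℝ)/2) = (3:ℝ)/2 by norm_num] at h
  exact h

lemma Wfun_fderiv_bound :
    ∃ C > 0, ∀ x : E5, ‖fderiv ℝ Wfun x‖ ≤ C * (1 + ‖x‖ ^ 2) ^ (-(2:ℝ)) := by
  refine ⟨(3/2) * (2/15) * 15 ^ ((5:ℝ)/2), by positivity, fun x => ?_⟩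
  rw [(Wfun_hasFDerivAt x).fderiv, norm_smul, Real.norm_eq_abs,
    innerSL_apply_norm (𝕜 := ℝ) x]
  have hb : (0:ℝ) < 1 + ‖x‖ ^ 2 / 15 := by positivity
  have hB : (0:ℝ) < 1 + ‖x‖ ^ 2 := by positivity
  have h2 : |(-(3:ℝ)/2) * (1 + ‖x‖ ^ 2 / 15) ^ (-(3:ℝ)/2 - 1) * (2/15)|
      = (3/2) * (2/15) * (1 + ‖x‖ ^ 2 / 15) ^ (-(5:ℝ)/2) := by
    rw [show (-(3:ℝ)/2 - 1) = -(5:ℝ)/2 by norm_num, abs_mul, abs_mul,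
      abs_of_pos (Real.rpow_pos_of_pos hb _),
      show |(-(3:ℝ)/2)| = 3/2 from by rw [abs_div]; norm_num,
      show |(2:ℝ)/15| = 2/15 from by rw [abs_div]; norm_num]
    ring
  rw [h2]
  have h3 : (1 + ‖x‖ ^ 2 / 15) ^ (-(5:ℝ)/2) ≤ 15 ^ ((5:ℝ)/2) * (1 + ‖x‖ ^ 2) ^ (-(5:ℝ)/2) := by
    have h := rpow_transfer (M := 15) (a := 1 + ‖x‖ ^ 2) (b := 1 + ‖x‖ ^ 2 / 15)
      (p := -(5:ℝ)/2) (by norm_num) hB hb (by nlinarith [sq_nonneg ‖x‖]) (by norm_num)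
    rwa [show -(-(5:ℝ)/2) = (5:ℝ)/2 by norm_num] at h
  have h4 : ‖x‖ * (1 + ‖x‖ ^ 2) ^ (-(5:ℝ)/2) ≤ (1 + ‖x‖ ^ 2) ^ (-(2:ℝ)) := by
    calc ‖x‖ * (1 + ‖x‖ ^ 2) ^ (-(5:ℝ)/2)
        ≤ (1 + ‖x‖ ^ 2) ^ ((1:ℝ)/2) * (1 + ‖x‖ ^ 2) ^ (-(5:ℝ)/2) :=
          mul_le_mul_of_nonneg_right (sq_le_one_add_sq ‖x‖)
            (Real.rpow_pos_of_pos hB _).le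
      _ = (1 + ‖x‖ ^ 2) ^ (-(2:ℝ)) := by
          rw [← Real.rpow_add hB]; norm_num
  calc (3/2) * (2/15) * (1 + ‖x‖ ^ 2 / 15) ^ (-(5:ℝ)/2) * ‖x‖
      ≤ (3/2) * (2/15) * (15 ^ ((5:ℝ)/2) * (1 + ‖x‖ ^ 2) ^ (-(5:ℝ)/2)) * ‖x‖ := by
        have := mul_le_mul_of_nonneg_left h3 (by norm_num : (0:ℝ) ≤ (3/2) * (2/15))
        exact mul_le_mul_of_nonneg_right this (norm_nonneg x)
    _ = (3/2) * (2/15) * 15 ^ ((5:ℝ)/2) * (‖x‖ * (1 + ‖x‖ ^ 2) ^ (-(5:ℝ)/2)) := by ring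
    _ ≤ (3/2) * (2/15) * 15 ^ ((5:ℝ)/2) * (1 + ‖x‖ ^ 2) ^ (-(2:ℝ)) :=
        mul_le_mul_of_nonneg_left h4 (by positivity)

lemma one_add_sq_mono {x y : E5} (h : ‖x‖ ≤ ‖y‖) {p : ℝ} (hp : p ≤ 0) :
    (1 + ‖y‖ ^ 2) ^ p ≤ (1 + ‖x‖ ^ 2) ^ p :=
  Real.rpow_le_rpow_of_nonpos (by positivity)
    (by nlinarith [norm_nonneg x, norm_nonneg y]) hp

lemma Wl_hasFDerivAt (l : E5) (x : E5) :
    HasFDerivAt (Wl l) ((fderiv ℝ Wfun (Tl l x)).comp (Tl l)) x := by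
  have h1 : HasFDerivAt Wfun (fderiv ℝ Wfun (Tl l x)) (Tl l x) :=
    (Wfun_hasFDerivAt (Tl l x)).differentiableAt.hasFDerivAt
  have h2 := h1.comp x (Tl l).hasFDerivAt
  have h3 : Wl l = fun y => Wfun (Tl l y) := funext (Wl_eq l)
  rw [h3]
  exact h2

lemma Wl_abs_le (l : E5) (hl : ‖l‖ < 1) (x : E5) :
    |Wl l x| ≤ 15 ^ ((3:ℝ)/2) * (1 + ‖x‖ ^ 2) ^ (-(3:ℝ)/2) := by
  rw [Wl_eq, abs_of_nonneg (Wfun_nonneg _)]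
  calc Wfun (Tl l x) ≤ 15 ^ ((3:ℝ)/2) * (1 + ‖Tl l x‖ ^ 2) ^ (-(3:ℝ)/2) := Wfun_le _
    _ ≤ 15 ^ ((3:ℝ)/2) * (1 + ‖x‖ ^ 2) ^ (-(3:ℝ)/2) :=
        mul_le_mul_of_nonneg_left
          (one_add_sq_mono (Tl_norm_ge l hl x) (by norm_num)) (by positivity)

lemma Wl_fderiv_bound (l : E5) (hl : ‖l‖ < 1) :
    ∃ C > 0, ∀ x : E5, ‖fderiv ℝ (Wl l) x‖ ≤ C * (1 + ‖x‖ ^ 2) ^ (-(2:ℝ)) := by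
  obtain ⟨C, hC, hCb⟩ := Wfun_fderiv_bound
  refine ⟨C * (‖Tl l‖ + 1), by positivity, fun x => ?_⟩
  rw [(Wl_hasFDerivAt l x).fderiv]
  have hmono : (1 + ‖Tl l x‖ ^ 2) ^ (-(2:ℝ)) ≤ (1 + ‖x‖ ^ 2) ^ (-(2:ℝ)) :=
    one_add_sq_mono (Tl_norm_ge l hl x) (by norm_num)
  calc ‖(fderiv ℝ Wfun (Tl l x)).comp (Tl l)‖
      ≤ ‖fderiv ℝ Wfun (Tl l x)‖ * ‖Tl l‖ := ContinuousLinearMap.opNorm_comp_le _ _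
    _ ≤ (C * (1 + ‖x‖ ^ 2) ^ (-(2:ℝ))) * (‖Tl l‖ + 1) :=
        mul_le_mul ((hCb _).trans (mul_le_mul_of_nonneg_left hmono hC.le))
          (by linarith [norm_nonneg (Tl l)]) (norm_nonneg _) (by positivity)
    _ = C * (‖Tl l‖ + 1) * (1 + ‖x‖ ^ 2) ^ (-(2:ℝ)) := by ring

lemma hasFDerivAt_scaled {f : E5 → ℝ} {f' : E5 →L[ℝ] ℝ} (c a : ℝ) (b : E5) (x : E5)
    (hf : HasFDerivAt f f' (a • (x - b))) :
    HasFDerivAt (fun z => c * f (a • (z - b))) ((c * a) • f') x := by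
  have hg : HasFDerivAt (fun z : E5 => a • (z - b))
      (a • ContinuousLinearMap.id ℝ E5) x :=
    ((hasFDerivAt_id x).sub_const b).const_smul a
  have h2 := (hf.comp x hg).const_mul c
  refine h2.congr_fderiv ?_
  ext v
  simp [smul_eq_mul]
  ring

lemma jap_pos (z : E5) : 0 < jap z := Real.rpow_pos_of_pos (by positivity) _

lemma one_le_jap (z : E5) : 1 ≤ jap z :=
  Real.one_le_rpow (by nlinarith [sq_nonneg ‖z‖]) (by norm_num)

lemma jap_zeta_rpow_le {l : E5} (hl : ‖l‖ < 1) (t : ℝ) (x : E5) {p : ℝ} (hp : p ≤ 0) :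
    jap (zeta l t x) ^ p ≤ (1 + ‖x - t • l‖ ^ 2) ^ (p/2) := by
  rw [zeta_eq]
  have h0 : (0:ℝ) < 1 + ‖x - t • l‖ ^ 2 := by positivity
  have h1 : (1 + ‖x - t • l‖ ^ 2) ^ ((1:ℝ)/2) ≤ jap (Tl l (x - t • l)) := by
    rw [jap]
    exact Real.rpow_le_rpow h0.le
      (by nlinarith [Tl_norm_ge l hl (x - t • l), norm_nonneg (x - t•l),
        norm_nonneg (Tl l (x - t•l))]) (by norm_num)
  calc jap (Tl l (x - t • l)) ^ p ≤ ((1 + ‖x - t • l‖ ^ 2) ^ ((1:ℝ)/2)) ^ p :=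
      Real.rpow_le_rpow_of_nonpos (Real.rpow_pos_of_pos h0 _) h1 hp
    _ = (1 + ‖x - t • l‖ ^ 2) ^ (p/2) := by
      rw [← Real.rpow_mul h0.le, show (1:ℝ)/2 * p = p/2 by ring]

lemma shift_sq_bound {R : ℝ} (hR : 0 ≤ R) {a u : E5} (h : ‖a - u‖ ≤ R) :
    1 + ‖a‖ ^ 2 ≤ (2 + 2 * R ^ 2) * (1 + ‖u‖ ^ 2) := by
  have h1 : ‖a‖ ≤ ‖u‖ + R := by
    calc ‖a‖ = ‖u + (a - u)‖ := by rw [add_sub_cancel]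
    _ ≤ ‖u‖ + ‖a - u‖ := norm_add_le _ _
    _ ≤ ‖u‖ + R := by linarith
  nlinarith [norm_nonneg a, norm_nonneg u, sq_nonneg (‖u‖ - R)]

lemma scale_sq_bound {L ν : ℝ} (hL : 0 < L) (hν : L ≤ ν) (u : E5) :
    1 + ‖u‖ ^ 2 ≤ (1 + ν ^ 2) * (1 + ‖L⁻¹ • u‖ ^ 2) := by
  have huw : u = L • (L⁻¹ • u) := by
    rw [smul_smul, mul_inv_cancel₀ hL.ne', one_smul]
  have h1 : ‖u‖ ≤ ν * ‖L⁻¹ • u‖ := by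
    calc ‖u‖ = ‖L • (L⁻¹ • u)‖ := by rw [← huw]
    _ = |L| * ‖L⁻¹ • u‖ := by rw [norm_smul, Real.norm_eq_abs]
    _ ≤ ν * ‖L⁻¹ • u‖ := by
        apply mul_le_mul_of_nonneg_right _ (norm_nonneg _)
        rw [abs_of_pos hL]; exact hν
  nlinarith [norm_nonneg u, norm_nonneg (L⁻¹ • u), hL.le.trans hν, sq_nonneg ‖L⁻¹ • u‖]

/-- Combined shift-and-scale comparison for negative powers. -/
lemma shift_scale_rpow {μ ν R : ℝ} (hμ : 0 < μ) (hν : μ ≤ ν) (hR : 0 ≤ R) {p : ℝ} (hp : p ≤ 0)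
    {L : ℝ} (h1 : μ ≤ L) (h2 : L ≤ ν) {u a : E5} (h3 : ‖a - u‖ ≤ R) :
    (1 + ‖L⁻¹ • u‖ ^ 2) ^ p ≤ ((2 + 2 * R ^ 2) * (1 + ν ^ 2)) ^ (-p) * (1 + ‖a‖ ^ 2) ^ p := by
  have hL : 0 < L := hμ.trans_le h1
  apply rpow_transfer (by positivity) (by positivity) (by positivity) _ hp
  calc 1 + ‖a‖ ^ 2 ≤ (2 + 2 * R ^ 2) * (1 + ‖u‖ ^ 2) := shift_sq_bound hR h3
    _ ≤ (2 + 2 * R ^ 2) * ((1 + ν ^ 2) * (1 + ‖L⁻¹ • u‖ ^ 2)) := by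
        apply mul_le_mul_of_nonneg_left (scale_sq_bound hL h2 u) (by positivity)
    _ = (2 + 2 * R ^ 2) * (1 + ν ^ 2) * (1 + ‖L⁻¹ • u‖ ^ 2) := by ring

/-- Estimates for the rescaled inner ℝ profiles. -/
lemma v_est {l : E5} (hl : ‖l‖ < 1) (vk : ℝ → E5 → ℝ) {δ : ℝ} (hδ : δ ∈ Set.Ioo (0:ℝ) 1)
    {C0 C1 : ℝ} (hC0 : 0 < C0) (hC1 : 0 < C1)
    (hb0 : ∀ s ≥ (1:ℝ), ∀ z : E5,
      |vk s z| ≤ C0 * (s + jap (zeta l s z))⁻¹ * s ^ (-(1:ℝ)) * jap (zeta l s z) ^ (δ-2) ∧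
      ‖gradient (vk s) z‖ ≤
        C0 * (s + jap (zeta l s z))⁻¹ * s ^ (-(1:ℝ)) * jap (zeta l s z) ^ (δ-3))
    (hb1 : ∀ s ≥ (1:ℝ), ∀ z : E5,
      |Al l vk s z| ≤ C1 * (s + jap (zeta l s z))⁻¹ * s ^ (-(2:ℝ)) * jap (zeta l s z) ^ (δ-2)) :
    ∀ s ≥ (1:ℝ), ∀ z : E5,
      |vk s z| ≤ C0 * s⁻¹ * (1 + ‖z - s • l‖ ^ 2) ^ ((δ-3)/2) ∧
      ‖fderiv ℝ (vk s) z‖ ≤ C0 * (s⁻¹ * s⁻¹) * (1 + ‖z - s • l‖ ^ 2) ^ ((δ-3)/2) ∧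
      |dt vk s z| ≤ (C1 + C0) * (s⁻¹ * s⁻¹) * (1 + ‖z - s • l‖ ^ 2) ^ ((δ-3)/2) := by
  intro s hs z
  have hspos : (0:ℝ) < s := lt_of_lt_of_le one_pos hs
  have hjpos := jap_pos (zeta l s z)
  have hj1 := one_le_jap (zeta l s z)
  have hBpos : (0:ℝ) < 1 + ‖z - s • l‖ ^ 2 := by positivity
  have hδ2 : δ - 2 ≤ 0 := by linarith [hδ.2]
  have hδ3 : δ - 3 ≤ 0 := by linarith [hδ.2]
  have hsinv : (s + jap (zeta l s z))⁻¹ ≤ (jap (zeta l s z))⁻¹ := by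
    apply inv_anti₀ hjpos; linarith
  have hsinv' : (s + jap (zeta l s z))⁻¹ ≤ s⁻¹ := by
    apply inv_anti₀ hspos; linarith
  have hjj : (jap (zeta l s z))⁻¹ * jap (zeta l s z) ^ (δ-2)
      = jap (zeta l s z) ^ (δ-3) := by
    rw [← Real.rpow_neg_one (jap (zeta l s z)), ← Real.rpow_add hjpos,
      show (-1:ℝ) + (δ - 2) = δ - 3 by ring]
  have hjB : jap (zeta l s z) ^ (δ-3) ≤ (1 + ‖z - s • l‖ ^ 2) ^ ((δ-3)/2) :=
    jap_zeta_rpow_le hl s z hδ3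
  have hjd2 : (0:ℝ) ≤ jap (zeta l s z) ^ (δ-2) := (Real.rpow_pos_of_pos hjpos _).le
  have hs1 : s ^ (-(1:ℝ)) = s⁻¹ := Real.rpow_neg_one s
  have hs2 : s ^ (-(2:ℝ)) = s⁻¹ * s⁻¹ := by
    rw [show (-(2:ℝ)) = (-1) + (-1) by norm_num, Real.rpow_add hspos,
      Real.rpow_neg_one]
  -- generic: C * (s+jap)⁻¹ * s^a * jap^(δ-2) ≤ C * sb * B^((δ-3)/2)
  have main : ∀ Cc sa : ℝ, 0 < Cc → 0 ≤ sa →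
      Cc * (s + jap (zeta l s z))⁻¹ * sa * jap (zeta l s z) ^ (δ-2)
        ≤ Cc * sa * (1 + ‖z - s • l‖ ^ 2) ^ ((δ-3)/2) := by
    intro Cc sa hCc hsa
    calc Cc * (s + jap (zeta l s z))⁻¹ * sa * jap (zeta l s z) ^ (δ-2)
        ≤ Cc * (jap (zeta l s z))⁻¹ * sa * jap (zeta l s z) ^ (δ-2) := by
          apply mul_le_mul_of_nonneg_right _ hjd2
          apply mul_le_mul_of_nonneg_right _ hsa
          exact mul_le_mul_of_nonneg_left hsinv hCc.le
      _ = Cc * sa * ((jap (zeta l s z))⁻¹ * jap (zeta l s z) ^ (δ-2)) := by ring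
      _ = Cc * sa * jap (zeta l s z) ^ (δ-3) := by rw [hjj]
      _ ≤ Cc * sa * (1 + ‖z - s • l‖ ^ 2) ^ ((δ-3)/2) := by
          apply mul_le_mul_of_nonneg_left hjB (by positivity)
  refine ⟨?_, ?_, ?_⟩
  · have h := (hb0 s hs z).1
    rw [hs1] at h
    exact h.trans (main C0 s⁻¹ hC0 (by positivity))
  · have h := (hb0 s hs z).2
    rw [hs1] at h
    rw [← norm_gradient_eq]
    refine h.trans ?_
    have step : C0 * (s + jap (zeta l s z))⁻¹ * s⁻¹ * jap (zeta l s z) ^ (δ-3)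
        ≤ C0 * (s⁻¹ * s⁻¹) * (1 + ‖z - s • l‖ ^ 2) ^ ((δ-3)/2) := by
      calc C0 * (s + jap (zeta l s z))⁻¹ * s⁻¹ * jap (zeta l s z) ^ (δ-3)
          ≤ C0 * s⁻¹ * s⁻¹ * jap (zeta l s z) ^ (δ-3) := by
            apply mul_le_mul_of_nonneg_right _ (Real.rpow_pos_of_pos hjpos _).le
            apply mul_le_mul_of_nonneg_right _ (by positivity)
            exact mul_le_mul_of_nonneg_left hsinv' hC0.le
        _ ≤ C0 * s⁻¹ * s⁻¹ * (1 + ‖z - s • l‖ ^ 2) ^ ((δ-3)/2) := by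
            apply mul_le_mul_of_nonneg_left hjB (by positivity)
        _ = C0 * (s⁻¹ * s⁻¹) * (1 + ‖z - s • l‖ ^ 2) ^ ((δ-3)/2) := by ring
    exact step
  · have hAl := hb1 s hs z
    rw [hs2] at hAl
    have hgrad := (hb0 s hs z).2
    rw [hs1] at hgrad
    have hdt : dt vk s z = Al l vk s z - fderiv ℝ (vk s) z l := by
      rw [dt, Al]; ring
    have hfl : |fderiv ℝ (vk s) z l| ≤ ‖fderiv ℝ (vk s) z‖ := by
      calc |fderiv ℝ (vk s) z l| ≤ ‖fderiv ℝ (vk s) z‖ * ‖l‖ :=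
          (fderiv ℝ (vk s) z).le_opNorm l
      _ ≤ ‖fderiv ℝ (vk s) z‖ * 1 :=
          mul_le_mul_of_nonneg_left hl.le (norm_nonneg _)
      _ = ‖fderiv ℝ (vk s) z‖ := mul_one _
    have h1 : |Al l vk s z| ≤ C1 * (s⁻¹ * s⁻¹) * (1 + ‖z - s • l‖ ^ 2) ^ ((δ-3)/2) :=
      hAl.trans (main C1 (s⁻¹ * s⁻¹) hC1 (by positivity))
    have h2 : |fderiv ℝ (vk s) z l| ≤ C0 * (s⁻¹ * s⁻¹) * (1 + ‖z - s • l‖ ^ 2) ^ ((δ-3)/2) := by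
      refine hfl.trans ?_
      rw [← norm_gradient_eq]
      refine hgrad.trans ?_
      calc C0 * (s + jap (zeta l s z))⁻¹ * s⁻¹ * jap (zeta l s z) ^ (δ-3)
          ≤ C0 * s⁻¹ * s⁻¹ * jap (zeta l s z) ^ (δ-3) := by
            apply mul_le_mul_of_nonneg_right _ (Real.rpow_pos_of_pos hjpos _).le
            apply mul_le_mul_of_nonneg_right _ (by positivity)
            exact mul_le_mul_of_nonneg_left hsinv' hC0.le
        _ ≤ C0 * s⁻¹ * s⁻¹ * (1 + ‖z - s • l‖ ^ 2) ^ ((δ-3)/2) :=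
            mul_le_mul_of_nonneg_left hjB (by positivity)
        _ = C0 * (s⁻¹ * s⁻¹) * (1 + ‖z - s • l‖ ^ 2) ^ ((δ-3)/2) := by ring
    have habs : |dt vk s z| ≤ |Al l vk s z| + |fderiv ℝ (vk s) z l| := by
      rw [hdt]; exact abs_sub _ _
    have he : (C1 + C0) * (s⁻¹ * s⁻¹) * (1 + ‖z - s • l‖ ^ 2) ^ ((δ-3)/2)
        = C1 * (s⁻¹ * s⁻¹) * (1 + ‖z - s • l‖ ^ 2) ^ ((δ-3)/2)
          + C0 * (s⁻¹ * s⁻¹) * (1 + ‖z - s • l‖ ^ 2) ^ ((δ-3)/2) := by ring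
    rw [he]
    exact habs.trans (add_le_add h1 h2)

lemma Wk_est {l : E5} (hl : ‖l‖ < 1) {eps : ℝ} (heps : |eps| = 1) {μ ν R : ℝ}
    (hμ : 0 < μ) (hν : μ ≤ ν) (hR : 0 ≤ R) :
    ∃ C > 0, ∀ {L : ℝ}, μ ≤ L → L ≤ ν → ∀ (b x a : E5), ‖a - (x - b)‖ ≤ R →
      |eps * L ^ (-(3:ℝ)/2) * Wl l (L⁻¹ • (x - b))| ≤ C * (1 + ‖a‖^2) ^ (-(3:ℝ)/2) ∧
      HasFDerivAt (fun z => eps * L ^ (-(3:ℝ)/2) * Wl l (L⁻¹ • (z - b)))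
        (((eps * L ^ (-(3:ℝ)/2)) * L⁻¹) • fderiv ℝ (Wl l) (L⁻¹ • (x - b))) x ∧
      ‖((eps * L ^ (-(3:ℝ)/2)) * L⁻¹) • fderiv ℝ (Wl l) (L⁻¹ • (x - b))‖
        ≤ C * (1 + ‖a‖^2) ^ (-(2:ℝ)) ∧
      |(((eps * L ^ (-(3:ℝ)/2)) * L⁻¹) • fderiv ℝ (Wl l) (L⁻¹ • (x - b))) (x - b)|
        ≤ C * (1 + ‖a‖^2) ^ (-(3:ℝ)/2) := by
  obtain ⟨Cw, hCw, hCwb⟩ := Wl_fderiv_bound l hl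
  set M : ℝ := (2 + 2*R^2) * (1 + ν^2) with hM
  have hMpos : 0 < M := by positivity
  refine ⟨μ ^ (-(3:ℝ)/2) * 15 ^ ((3:ℝ)/2) * M ^ ((3:ℝ)/2)
      + μ ^ (-(3:ℝ)/2) * μ⁻¹ * Cw * M ^ (2:ℝ)
      + μ ^ (-(3:ℝ)/2) * Cw * M ^ ((3:ℝ)/2), by positivity, ?_⟩
  intro L h1 h2 b x a h3
  have hLpos : 0 < L := hμ.trans_le h1
  set w : E5 := L⁻¹ • (x - b) with hw
  have hwpos : (0:ℝ) < 1 + ‖w‖^2 := by positivity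
  have hapos : (0:ℝ) < 1 + ‖a‖^2 := by positivity
  have hL32 : L ^ (-(3:ℝ)/2) ≤ μ ^ (-(3:ℝ)/2) :=
    Real.rpow_le_rpow_of_nonpos hμ h1 (by norm_num)
  have hL32pos : (0:ℝ) < L ^ (-(3:ℝ)/2) := Real.rpow_pos_of_pos hLpos _
  have hLinv : L⁻¹ ≤ μ⁻¹ := by
    apply inv_anti₀ hμ h1
  have hshift32 : (1 + ‖w‖^2) ^ (-(3:ℝ)/2) ≤ M ^ ((3:ℝ)/2) * (1 + ‖a‖^2) ^ (-(3:ℝ)/2) := by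
    have h := shift_scale_rpow hμ hν hR (p := -(3:ℝ)/2) (by norm_num) h1 h2 h3
    rwa [show -(-(3:ℝ)/2) = (3:ℝ)/2 by norm_num] at h
  have hshift2 : (1 + ‖w‖^2) ^ (-(2:ℝ)) ≤ M ^ ((2:ℝ)) * (1 + ‖a‖^2) ^ (-(2:ℝ)) := by
    have h := shift_scale_rpow hμ hν hR (p := -(2:ℝ)) (by norm_num) h1 h2 h3
    rwa [show -(-(2:ℝ)) = (2:ℝ) by norm_num] at h
  have key1 : |eps * L ^ (-(3:ℝ)/2) * Wl l w|
      ≤ μ ^ (-(3:ℝ)/2) * 15 ^ ((3:ℝ)/2) * M ^ ((3:ℝ)/2) * (1 + ‖a‖^2) ^ (-(3:ℝ)/2) := by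
    rw [abs_mul, abs_mul, heps, one_mul, abs_of_pos hL32pos]
    calc L ^ (-(3:ℝ)/2) * |Wl l w|
        ≤ μ ^ (-(3:ℝ)/2) * (15 ^ ((3:ℝ)/2) * (1 + ‖w‖^2) ^ (-(3:ℝ)/2)) :=
          mul_le_mul hL32 (Wl_abs_le l hl w) (abs_nonneg _) (by positivity)
      _ ≤ μ ^ (-(3:ℝ)/2) * (15 ^ ((3:ℝ)/2) * (M ^ ((3:ℝ)/2) * (1 + ‖a‖^2) ^ (-(3:ℝ)/2))) := by
          apply mul_le_mul_of_nonneg_left _ (by positivity)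
          exact mul_le_mul_of_nonneg_left hshift32 (by positivity)
      _ = μ ^ (-(3:ℝ)/2) * 15 ^ ((3:ℝ)/2) * M ^ ((3:ℝ)/2) * (1 + ‖a‖^2) ^ (-(3:ℝ)/2) := by
          ring
  have hder : HasFDerivAt (fun z => eps * L ^ (-(3:ℝ)/2) * Wl l (L⁻¹ • (z - b)))
      (((eps * L ^ (-(3:ℝ)/2)) * L⁻¹) • fderiv ℝ (Wl l) w) x := by
    have hf : HasFDerivAt (Wl l) (fderiv ℝ (Wl l) (L⁻¹ • (x - b))) (L⁻¹ • (x - b)) :=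
      (Wl_hasFDerivAt l _).differentiableAt.hasFDerivAt
    exact hasFDerivAt_scaled (eps * L ^ (-(3:ℝ)/2)) L⁻¹ b x hf
  have hfd : ‖fderiv ℝ (Wl l) w‖ ≤ Cw * (1 + ‖w‖^2) ^ (-(2:ℝ)) := hCwb w
  have habs : |(eps * L ^ (-(3:ℝ)/2)) * L⁻¹| = L ^ (-(3:ℝ)/2) * L⁻¹ := by
    rw [abs_mul, abs_mul, heps, one_mul, abs_of_pos hL32pos, abs_of_pos (by positivity)]
  have key2 : ‖((eps * L ^ (-(3:ℝ)/2)) * L⁻¹) • fderiv ℝ (Wl l) w‖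
      ≤ μ ^ (-(3:ℝ)/2) * μ⁻¹ * Cw * M ^ (2:ℝ) * (1 + ‖a‖^2) ^ (-(2:ℝ)) := by
    rw [norm_smul, Real.norm_eq_abs, habs]
    calc L ^ (-(3:ℝ)/2) * L⁻¹ * ‖fderiv ℝ (Wl l) w‖
        ≤ (μ ^ (-(3:ℝ)/2) * μ⁻¹) * (Cw * (M ^ (2:ℝ) * (1 + ‖a‖^2) ^ (-(2:ℝ)))) := by
          apply mul_le_mul
          · exact mul_le_mul hL32 hLinv (by positivity) (by positivity)
          · exact hfd.trans (mul_le_mul_of_nonneg_left (hshift2) hCw.le)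
          · exact norm_nonneg _
          · positivity
      _ = μ ^ (-(3:ℝ)/2) * μ⁻¹ * Cw * M ^ (2:ℝ) * (1 + ‖a‖^2) ^ (-(2:ℝ)) := by ring
  have hxb : ‖x - b‖ ≤ L * (1 + ‖w‖^2) ^ ((1:ℝ)/2) := by
    have he : x - b = L • w := by
      rw [hw, smul_smul, mul_inv_cancel₀ hLpos.ne', one_smul]
    calc ‖x - b‖ = |L| * ‖w‖ := by rw [he, norm_smul, Real.norm_eq_abs]
      _ ≤ L * (1 + ‖w‖^2) ^ ((1:ℝ)/2) := by
          rw [abs_of_pos hLpos]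
          exact mul_le_mul_of_nonneg_left (sq_le_one_add_sq ‖w‖) hLpos.le
  have key3 : |(((eps * L ^ (-(3:ℝ)/2)) * L⁻¹) • fderiv ℝ (Wl l) w) (x - b)|
      ≤ μ ^ (-(3:ℝ)/2) * Cw * M ^ ((3:ℝ)/2) * (1 + ‖a‖^2) ^ (-(3:ℝ)/2) := by
    have h5 : |(((eps * L ^ (-(3:ℝ)/2)) * L⁻¹) • fderiv ℝ (Wl l) w) (x - b)|
        ≤ (L ^ (-(3:ℝ)/2) * L⁻¹) * (‖fderiv ℝ (Wl l) w‖ * ‖x - b‖) := by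
      rw [ContinuousLinearMap.smul_apply, smul_eq_mul, abs_mul, habs]
      apply mul_le_mul_of_nonneg_left _ (by positivity)
      exact (fderiv ℝ (Wl l) w).le_opNorm _
    refine h5.trans ?_
    calc (L ^ (-(3:ℝ)/2) * L⁻¹) * (‖fderiv ℝ (Wl l) w‖ * ‖x - b‖)
        ≤ (L ^ (-(3:ℝ)/2) * L⁻¹) * ((Cw * (1 + ‖w‖^2) ^ (-(2:ℝ)))
            * (L * (1 + ‖w‖^2) ^ ((1:ℝ)/2))) := by
          apply mul_le_mul_of_nonneg_left _ (by positivity)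
          exact mul_le_mul hfd hxb (norm_nonneg _) (by positivity)
      _ = L ^ (-(3:ℝ)/2) * Cw * (L⁻¹ * L) * ((1 + ‖w‖^2) ^ (-(2:ℝ)) * (1 + ‖w‖^2) ^ ((1:ℝ)/2)) := by
          ring
      _ = L ^ (-(3:ℝ)/2) * Cw * (1 + ‖w‖^2) ^ (-(3:ℝ)/2) := by
          rw [inv_mul_cancel₀ hLpos.ne', ← Real.rpow_add hwpos]
          norm_num
      _ ≤ μ ^ (-(3:ℝ)/2) * Cw * (M ^ ((3:ℝ)/2) * (1 + ‖a‖^2) ^ (-(3:ℝ)/2)) := by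
          apply mul_le_mul
          · exact mul_le_mul_of_nonneg_right hL32 hCw.le
          · exact hshift32
          · positivity
          · positivity
      _ = μ ^ (-(3:ℝ)/2) * Cw * M ^ ((3:ℝ)/2) * (1 + ‖a‖^2) ^ (-(3:ℝ)/2) := by ring
  have hCsum1 : μ ^ (-(3:ℝ)/2) * 15 ^ ((3:ℝ)/2) * M ^ ((3:ℝ)/2)
      ≤ μ ^ (-(3:ℝ)/2) * 15 ^ ((3:ℝ)/2) * M ^ ((3:ℝ)/2)
      + μ ^ (-(3:ℝ)/2) * μ⁻¹ * Cw * M ^ (2:ℝ)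
      + μ ^ (-(3:ℝ)/2) * Cw * M ^ ((3:ℝ)/2) := by
    have p1 : (0:ℝ) ≤ μ ^ (-(3:ℝ)/2) * μ⁻¹ * Cw * M ^ (2:ℝ) := by positivity
    have p2 : (0:ℝ) ≤ μ ^ (-(3:ℝ)/2) * Cw * M ^ ((3:ℝ)/2) := by positivity
    linarith
  have hCsum2 : μ ^ (-(3:ℝ)/2) * μ⁻¹ * Cw * M ^ (2:ℝ)
      ≤ μ ^ (-(3:ℝ)/2) * 15 ^ ((3:ℝ)/2) * M ^ ((3:ℝ)/2)
      + μ ^ (-(3:ℝ)/2) * μ⁻¹ * Cw * M ^ (2:ℝ)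
      + μ ^ (-(3:ℝ)/2) * Cw * M ^ ((3:ℝ)/2) := by
    have p1 : (0:ℝ) ≤ μ ^ (-(3:ℝ)/2) * 15 ^ ((3:ℝ)/2) * M ^ ((3:ℝ)/2) := by positivity
    have p2 : (0:ℝ) ≤ μ ^ (-(3:ℝ)/2) * Cw * M ^ ((3:ℝ)/2) := by positivity
    linarith
  have hCsum3 : μ ^ (-(3:ℝ)/2) * Cw * M ^ ((3:ℝ)/2)
      ≤ μ ^ (-(3:ℝ)/2) * 15 ^ ((3:ℝ)/2) * M ^ ((3:ℝ)/2)
      + μ ^ (-(3:ℝ)/2) * μ⁻¹ * Cw * M ^ (2:ℝ)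
      + μ ^ (-(3:ℝ)/2) * Cw * M ^ ((3:ℝ)/2) := by
    have p1 : (0:ℝ) ≤ μ ^ (-(3:ℝ)/2) * 15 ^ ((3:ℝ)/2) * M ^ ((3:ℝ)/2) := by positivity
    have p2 : (0:ℝ) ≤ μ ^ (-(3:ℝ)/2) * μ⁻¹ * Cw * M ^ (2:ℝ) := by positivity
    linarith
  refine ⟨key1.trans (mul_le_mul_of_nonneg_right hCsum1 (by positivity)), hder,
    key2.trans (mul_le_mul_of_nonneg_right hCsum2 (by positivity)),
    key3.trans (mul_le_mul_of_nonneg_right hCsum3 (by positivity))⟩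
set_option maxHeartbeats 2000000 in
/-- Pointwise estimates on the refined approximate solution (estimates (2.10)). -/
theorem refined_approximate_solution_bounds
    (K : ℕ) (hK : 2 ≤ K)
    (lamI : Fin K → ℝ) (hlam : ∀ k, 0 < lamI k)
    (yI : Fin K → E5)
    (eps : Fin K → ℝ) (heps : ∀ k, eps k = 1 ∨ eps k = -1)
    (l : Fin K → E5) (hl : ∀ k, ‖l k‖ < 1)
    (hll : ∀ k m, k ≠ m → l k ≠ l m)
    (C₀ : ℝ) (hC₀ : 1 < C₀)
    (v : Fin K → ℝ → E5 → ℝ)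
    (hv : ∀ k, ContDiffOn ℝ (⊤ : ℕ∞) (fun p : ℝ × E5 => v k p.1 p.2) (Set.Ici (1 : ℝ) ×ˢ Set.univ))
    (hvbound : ∀ k, ∀ δ' ∈ Set.Ioo (0 : ℝ) 1, ∀ m : ℕ, m ≤ 1 →
      ∃ C' > (0 : ℝ), ∀ t ≥ (1 : ℝ), ∀ x : E5,
        |((Al (l k))^[m] (v k)) t x| ≤
            C' * (t + jap (zeta (l k) t x))⁻¹ * t ^ (-(1 + (m : ℝ))) *
              jap (zeta (l k) t x) ^ (δ' - 2) ∧
        ‖((Al (l k))^[m] (fun s z => gradient (v k s) z)) t x‖ ≤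
            C' * (t + jap (zeta (l k) t x))⁻¹ * t ^ (-(1 + (m : ℝ))) *
              jap (zeta (l k) t x) ^ (δ' - 3)) :
    ∀ δ ∈ Set.Ioo (0 : ℝ) 1, ∃ C > (0 : ℝ), ∃ T₁ ≥ (1 : ℝ),
      ∀ I : Set ℝ, I ⊆ Set.Ici T₁ →
      ∀ lam : Fin K → ℝ → ℝ, ∀ y : Fin K → ℝ → E5,
      (∀ k, ContDiffOn ℝ 1 (lam k) I) →
      (∀ k, ContDiffOn ℝ 1 (fun t => y k t) I) →
      (∀ k, ∀ t ∈ I, |lam k t - lamI k| + ‖y k t - yI k‖ ≤ C₀ * t⁻¹) →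
      ∀ t ∈ I, ∀ x : E5,
        |bW lamI v lam y eps l t x| ≤
            C * (qsum l yI t x ^ 3 + t⁻¹ * qsum l yI t x ^ ((3 : ℝ) - δ)) ∧
        |bX lamI v lam y eps l t x| ≤
            C * (qsum l yI t x ^ 4 + t ^ (-(2 : ℝ)) * qsum l yI t x ^ ((3 : ℝ) - δ)) ∧
        ‖gradient (fun z => bW lamI v lam y eps l t z) x -
              ∑ k, gradient (fun z => Wk lam y eps l k t z) x‖ +
            |bX lamI v lam y eps l t x +
              ∑ k, fderiv ℝ (fun z => Wk lam y eps l k t z) x (l k)| ≤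
          C * t ^ (-(2 : ℝ)) * qsum l yI t x ^ ((3 : ℝ) - δ) := by
  intro δ hδ
  haveI : NeZero K := ⟨by omega⟩
  have hne : (Finset.univ : Finset (Fin K)).Nonempty := Finset.univ_nonempty
  set Λmin : ℝ := Finset.univ.inf' hne lamI with hΛmin_def
  set Λmax : ℝ := Finset.univ.sup' hne lamI with hΛmax_def
  have hΛle : ∀ k, Λmin ≤ lamI k := fun k => Finset.inf'_le _ (Finset.mem_univ k)
  have hΛge : ∀ k, lamI k ≤ Λmax := fun k => Finset.le_sup' _ (Finset.mem_univ k)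
  have hΛminpos : 0 < Λmin := by
    obtain ⟨k, -, hk⟩ := Finset.exists_mem_eq_inf' hne lamI
    rw [hΛmin_def, hk]; exact hlam k
  have hminmax : Λmin ≤ Λmax := (hΛle ⟨0, by omega⟩).trans (hΛge _)
  have hΛmaxpos : 0 < Λmax := lt_of_lt_of_le hΛminpos hminmax
  have hC₀pos : (0:ℝ) < C₀ := lt_trans one_pos hC₀
  have hδ3 : (δ - 3) / 2 ≤ 0 := by have := hδ.2; linarith
  have h3δ : (0:ℝ) ≤ 3 - δ := by have := hδ.2; linarith
  -- per-k constants
  choose Cv0 hCv0pos hCv0 using fun k => hvbound k δ hδ 0 (by norm_num)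
  choose Cv1 hCv1pos hCv1 using fun k => hvbound k δ hδ 1 le_rfl
  have hepsabs : ∀ k, |eps k| = 1 := by
    intro k; rcases heps k with h | h <;> simp [h]
  choose CW hCWpos hCW using fun k =>
    Wk_est (hl k) (hepsabs k) (μ := Λmin/2) (ν := 2*Λmax) (R := C₀)
      (by positivity) (by linarith) hC₀pos.le
  -- the v-part shift constant
  set Mv : ℝ := ((2 + 2*C₀^2) * (1 + (2*Λmax)^2)) ^ ((3-δ)/2) with hMv_def
  have hMvpos : 0 < Mv := Real.rpow_pos_of_pos (by positivity) _
  set Ev0 : Fin K → ℝ := fun k => (Λmin/2) ^ (-(3:ℝ)) * Cv0 k * (2*Λmax) * Mv with hEv0_def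
  set Ev1 : Fin K → ℝ := fun k =>
    (Λmin/2) ^ (-(3:ℝ)) * (Λmin/2)⁻¹ * Cv0 k * ((2*Λmax) * (2*Λmax)) * Mv with hEv1_def
  set Ez : Fin K → ℝ := fun k =>
    (Λmin/2) ^ (-(4:ℝ)) * (Cv1 k + Cv0 k) * ((2*Λmax) * (2*Λmax)) * Mv
      + |kappal (l k)| * (Λmin/2) ^ (-(1:ℝ)/2) / 2 * ((5/2) * CW k) with hEz_def
  have hEv0pos : ∀ k, 0 < Ev0 k := fun k => by
    rw [hEv0_def]; have := hCv0pos k; positivity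
  have hEv1pos : ∀ k, 0 < Ev1 k := fun k => by
    rw [hEv1_def]; have := hCv0pos k; positivity
  have hEznn : ∀ k, 0 ≤ Ez k := fun k => by
    rw [hEz_def]
    have := hCv0pos k; have := hCv1pos k; have := hCWpos k
    positivity
  set G : Fin K → ℝ := fun k =>
    (1 + |ck lamI eps l k|) * (CW k + Ev0 k + Ev1 k + Ez k) with hG_def
  have hGnn : ∀ k, 0 ≤ G k := fun k => by
    rw [hG_def]
    have := hCWpos k; have := hEv0pos k; have := hEv1pos k; have := hEznn k
    positivity
  have hGdom : ∀ k, CW k ≤ G k ∧ |ck lamI eps l k| * Ev0 k ≤ G k ∧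
      |ck lamI eps l k| * Ev1 k ≤ G k ∧
      |ck lamI eps l k| * Ev1 k + |ck lamI eps l k| * Ez k ≤ G k := by
    intro k
    have h1 := hCWpos k; have h2 := hEv0pos k; have h3 := hEv1pos k
    have h4 := hEznn k
    have h5 : (0:ℝ) ≤ |ck lamI eps l k| := abs_nonneg _
    simp only [hG_def]
    set a := |ck lamI eps l k|
    set S := CW k + Ev0 k + Ev1 k + Ez k with hS_def
    have hSnn : 0 ≤ S := by rw [hS_def]; linarith
    have hexp : (1 + a) * S = S + a * S := by ring
    have haS : 0 ≤ a * S := mul_nonneg h5 hSnn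
    have hEv0S : a * Ev0 k ≤ a * S := mul_le_mul_of_nonneg_left (by rw [hS_def]; linarith) h5
    have hEv1S : a * Ev1 k ≤ a * S := mul_le_mul_of_nonneg_left (by rw [hS_def]; linarith) h5
    have hsumS : a * Ev1 k + a * Ez k ≤ a * S := by
      calc a * Ev1 k + a * Ez k = a * (Ev1 k + Ez k) := by ring
        _ ≤ a * S := mul_le_mul_of_nonneg_left (by rw [hS_def]; linarith) h5
    have hCWS : CW k ≤ S := by rw [hS_def]; linarith
    exact ⟨by rw [hexp]; linarith, by rw [hexp]; linarith,
      by rw [hexp]; linarith, by rw [hexp]; linarith⟩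
  have hsumGnn : 0 ≤ ∑ k, G k := Finset.sum_nonneg (fun k _ => hGnn k)
  have hquotpos : (0:ℝ) < 2*C₀/Λmin := by positivity
  refine ⟨1 + ∑ k, G k, by linarith, 1 + 2*C₀/Λmin + 4*Λmax, by linarith, ?_⟩
  set C : ℝ := 1 + ∑ k, G k with hC_def
  set T₁ : ℝ := 1 + 2*C₀/Λmin + 4*Λmax with hT₁_def
  have hGC : ∀ k, G k ≤ C := by
    intro k
    rw [hC_def]
    have h1 : G k ≤ ∑ m, G m := Finset.single_le_sum (fun m _ => hGnn m) (Finset.mem_univ k)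
    linarith
  have hsumGC : ∑ k, G k ≤ C := by rw [hC_def]; linarith
  intro I hI lam y hlamC1 hyC1 hclose t ht x
  have htT : T₁ ≤ t := hI ht
  have ht1 : (1:ℝ) ≤ t := by
    rw [hT₁_def] at htT
    have : (0:ℝ) < 2*C₀/Λmin := by positivity
    linarith
  have htpos : (0:ℝ) < t := lt_of_lt_of_le one_pos ht1
  have ht2 : t⁻¹ * t⁻¹ = t ^ (-(2:ℝ)) := by
    rw [show (-(2:ℝ)) = (-1) + (-1) by norm_num, Real.rpow_add htpos,
      Real.rpow_neg_one]
  -- q facts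
  have hqpos : ∀ k, 0 < qk l yI k t x := fun k => Real.rpow_pos_of_pos (by positivity) _
  have hQpos : 0 < qsum l yI t x := by
    rw [qsum]
    exact Finset.sum_pos (fun k _ => hqpos k) hne
  have hqle : ∀ k, qk l yI k t x ≤ qsum l yI t x := by
    intro k
    rw [qsum]
    exact Finset.single_le_sum (fun m _ => (hqpos m).le) (Finset.mem_univ k)
  have hBpos : ∀ k : Fin K, (0:ℝ) < 1 + ‖x - t • l k - yI k‖ ^ 2 := fun k => by positivity
  have hB1 : ∀ k : Fin K, (1:ℝ) ≤ 1 + ‖x - t • l k - yI k‖ ^ 2 := fun k => by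
    nlinarith [sq_nonneg ‖x - t • l k - yI k‖]
  have hqk_eq : ∀ k, qk l yI k t x = (1 + ‖x - t • l k - yI k‖ ^ 2) ^ (-(1:ℝ)/2) :=
    fun k => rfl
  have conv1 : ∀ k, (1 + ‖x - t • l k - yI k‖ ^ 2) ^ (-(3:ℝ)/2) ≤ qsum l yI t x ^ 3 := by
    intro k
    have he : (1 + ‖x - t • l k - yI k‖ ^ 2) ^ (-(3:ℝ)/2) = qk l yI k t x ^ 3 := by
      rw [hqk_eq k, ← Real.rpow_natCast ((1 + ‖x - t • l k - yI k‖ ^ 2) ^ (-(1:ℝ)/2)) 3,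
        ← Real.rpow_mul (hBpos k).le]
      norm_num
    rw [he]
    exact pow_le_pow_left₀ (hqpos k).le (hqle k) 3
  have conv2 : ∀ k, (1 + ‖x - t • l k - yI k‖ ^ 2) ^ (-(2:ℝ)) ≤ qsum l yI t x ^ 4 := by
    intro k
    have he : (1 + ‖x - t • l k - yI k‖ ^ 2) ^ (-(2:ℝ)) = qk l yI k t x ^ 4 := by
      rw [hqk_eq k, ← Real.rpow_natCast ((1 + ‖x - t • l k - yI k‖ ^ 2) ^ (-(1:ℝ)/2)) 4,
        ← Real.rpow_mul (hBpos k).le]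
      norm_num
    rw [he]
    exact pow_le_pow_left₀ (hqpos k).le (hqle k) 4
  have conv3 : ∀ k, (1 + ‖x - t • l k - yI k‖ ^ 2) ^ ((δ-3)/2)
      ≤ qsum l yI t x ^ ((3:ℝ) - δ) := by
    intro k
    have he : (1 + ‖x - t • l k - yI k‖ ^ 2) ^ ((δ-3)/2) = qk l yI k t x ^ ((3:ℝ) - δ) := by
      rw [hqk_eq k, ← Real.rpow_mul (hBpos k).le,
        show (-(1:ℝ)/2) * ((3:ℝ) - δ) = (δ-3)/2 by ring]
    rw [he]
    exact Real.rpow_le_rpow (hqpos k).le (hqle k) h3δ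

  -- per-k main estimates
  have key : ∀ k : Fin K, ∃ DW : E5 →L[ℝ] ℝ, ∃ Dv : E5 →L[ℝ] ℝ,
      HasFDerivAt (fun z => Wk lam y eps l k t z) DW x ∧
      HasFDerivAt (fun z => vkF v lam y k t z) Dv x ∧
      |Wk lam y eps l k t x| ≤ CW k * (1 + ‖x - t • l k - yI k‖ ^ 2) ^ (-(3:ℝ)/2) ∧
      ‖DW‖ ≤ CW k * (1 + ‖x - t • l k - yI k‖ ^ 2) ^ (-(2:ℝ)) ∧
      |DW (x - t • l k - y k t)| ≤ CW k * (1 + ‖x - t • l k - yI k‖ ^ 2) ^ (-(3:ℝ)/2) ∧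
      |vkF v lam y k t x| ≤ Ev0 k * t⁻¹ * (1 + ‖x - t • l k - yI k‖ ^ 2) ^ ((δ-3)/2) ∧
      ‖Dv‖ ≤ Ev1 k * (t⁻¹ * t⁻¹) * (1 + ‖x - t • l k - yI k‖ ^ 2) ^ ((δ-3)/2) ∧
      |zkF v lam y eps l k t x| ≤
        Ez k * (t⁻¹ * t⁻¹) * (1 + ‖x - t • l k - yI k‖ ^ 2) ^ ((δ-3)/2) := by
    intro k
    have hCv0k := hCv0pos k
    have hCv1k := hCv1pos k
    have hCWk := hCWpos k
    have hcl := hclose k t ht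
    have habs_l : |lam k t - lamI k| ≤ C₀ * t⁻¹ :=
      le_trans (le_add_of_nonneg_right (norm_nonneg _)) hcl
    have hynorm : ‖y k t - yI k‖ ≤ C₀ * t⁻¹ :=
      le_trans (le_add_of_nonneg_left (abs_nonneg _)) hcl
    have htT' : 1 + 2*C₀/Λmin + 4*Λmax ≤ t := by rw [hT₁_def] at htT; exact htT
    have hCt : C₀ * t⁻¹ ≤ Λmin / 2 := by
      have h1 : t⁻¹ ≤ (2*C₀/Λmin)⁻¹ := by
        apply inv_anti₀ hquotpos
        linarith [hΛmaxpos]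
      have h2 : C₀ * t⁻¹ ≤ C₀ * (2*C₀/Λmin)⁻¹ := mul_le_mul_of_nonneg_left h1 hC₀pos.le
      have h3 : C₀ * (2*C₀/Λmin)⁻¹ = Λmin / 2 := by
        field_simp
      linarith
    have hyC : ‖y k t - yI k‖ ≤ C₀ := by
      have h4 : C₀ * t⁻¹ ≤ C₀ * 1 := by
        apply mul_le_mul_of_nonneg_left _ hC₀pos.le
        exact inv_le_one_of_one_le₀ ht1
      linarith [hynorm]
    have hL1 : Λmin/2 ≤ lam k t := by
      have h5 := abs_le.mp habs_l
      have h6 := hΛle k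
      linarith [hCt, h5.1]
    have hL2 : lam k t ≤ 2*Λmax := by
      have h5 := abs_le.mp habs_l
      have h6 := hΛge k
      linarith [hCt, h5.2, hminmax, hΛmaxpos]
    have hLpos : 0 < lam k t := lt_of_lt_of_le (by positivity) hL1
    -- the W part
    have hshiftW : ‖(x - t • l k - yI k) - (x - (t • l k + y k t))‖ ≤ C₀ := by
      have he : (x - t • l k - yI k) - (x - (t • l k + y k t)) = y k t - yI k := by abel
      rw [he]; exact hyC
    obtain ⟨w1, w2, w3, w4⟩ := hCW k hL1 hL2 (t • l k + y k t) x (x - t • l k - yI k) hshiftW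
    have heWk : ∀ z : E5, Wk lam y eps l k t z
        = eps k * (lam k t) ^ (-(3:ℝ)/2) *
            Wl (l k) ((lam k t)⁻¹ • (z - (t • l k + y k t))) := by
      intro z; rw [Wk, sub_sub]
    have heWkfun : (fun z => Wk lam y eps l k t z)
        = fun z => eps k * (lam k t) ^ (-(3:ℝ)/2) *
            Wl (l k) ((lam k t)⁻¹ • (z - (t • l k + y k t))) := funext heWk
    have hDWd : HasFDerivAt (fun z => Wk lam y eps l k t z)
        ((eps k * (lam k t) ^ (-(3:ℝ)/2) * (lam k t)⁻¹) •
          fderiv ℝ (Wl (l k)) ((lam k t)⁻¹ • (x - (t • l k + y k t)))) x := by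
      rw [heWkfun]; exact w2
    have hK1 : |Wk lam y eps l k t x| ≤
        CW k * (1 + ‖x - t • l k - yI k‖ ^ 2) ^ (-(3:ℝ)/2) := by
      rw [heWk x]; exact w1
    have hsubsub : x - t • l k - y k t = x - (t • l k + y k t) := sub_sub _ _ _
    have hK5 : |((eps k * (lam k t) ^ (-(3:ℝ)/2) * (lam k t)⁻¹) •
          fderiv ℝ (Wl (l k)) ((lam k t)⁻¹ • (x - (t • l k + y k t))))
          (x - t • l k - y k t)| ≤
        CW k * (1 + ‖x - t • l k - yI k‖ ^ 2) ^ (-(3:ℝ)/2) := by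
      rw [hsubsub]; exact w4
    -- the v part
    set s : ℝ := t / lam k t with hs_def
    set z : E5 := (lam k t)⁻¹ • (x - y k t) with hz_def
    have hs2 : 2 ≤ s := by
      rw [hs_def, le_div_iff₀ hLpos]
      linarith [hquotpos]
    have hs1 : (1:ℝ) ≤ s := by linarith
    have hspos : (0:ℝ) < s := by linarith
    have hsinv : s⁻¹ ≤ 2*Λmax * t⁻¹ := by
      rw [hs_def, inv_div, div_eq_mul_inv]
      exact mul_le_mul_of_nonneg_right hL2 (inv_nonneg.mpr htpos.le)
    have hsinv_nn : (0:ℝ) ≤ s⁻¹ := inv_nonneg.mpr hspos.le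
    have hb0 : ∀ s' ≥ (1:ℝ), ∀ z' : E5,
        |v k s' z'| ≤ Cv0 k * (s' + jap (zeta (l k) s' z'))⁻¹ * s' ^ (-(1:ℝ)) *
            jap (zeta (l k) s' z') ^ (δ-2) ∧
        ‖gradient (v k s') z'‖ ≤ Cv0 k * (s' + jap (zeta (l k) s' z'))⁻¹ * s' ^ (-(1:ℝ)) *
            jap (zeta (l k) s' z') ^ (δ-3) := by
      intro s' hs' z'
      have h := hCv0 k s' hs' z'
      simpa using h
    have hb1 : ∀ s' ≥ (1:ℝ), ∀ z' : E5,
        |Al (l k) (v k) s' z'| ≤ Cv1 k * (s' + jap (zeta (l k) s' z'))⁻¹ * s' ^ (-(2:ℝ)) *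
            jap (zeta (l k) s' z') ^ (δ-2) := by
      intro s' hs' z'
      have h := (hCv1 k s' hs' z').1
      have e : -(1 + ((1:ℕ):ℝ)) = -(2:ℝ) := by norm_num
      rw [Function.iterate_one, e] at h
      exact h
    obtain ⟨hv1, hv2, hv3⟩ := v_est (hl k) (v k) hδ (hCv0pos k) (hCv1pos k) hb0 hb1 s hs1 z
    have hzsl : z - s • l k = (lam k t)⁻¹ • (x - t • l k - y k t) := by
      have h1 : s • l k = (lam k t)⁻¹ • (t • l k) := by
        rw [hs_def, div_eq_mul_inv, mul_comm, mul_smul]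
      rw [hz_def, h1, ← smul_sub]
      congr 1
      abel
    rw [hzsl] at hv1 hv2 hv3
    have hshiftv : ‖(x - t • l k - yI k) - (x - t • l k - y k t)‖ ≤ C₀ := by
      have he : (x - t • l k - yI k) - (x - t • l k - y k t) = y k t - yI k := by abel
      rw [he]; exact hyC
    have hMvB : (1 + ‖(lam k t)⁻¹ • (x - t • l k - y k t)‖^2) ^ ((δ-3)/2)
        ≤ Mv * (1 + ‖x - t • l k - yI k‖^2) ^ ((δ-3)/2) := by
      have h := shift_scale_rpow (μ := Λmin/2) (ν := 2*Λmax) (R := C₀) (by positivity)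
        (by linarith) hC₀pos.le hδ3 hL1 hL2 hshiftv
      rw [show -((δ-3)/2) = (3-δ)/2 by ring] at h
      rw [← hMv_def] at h
      exact h
    have hBbase_pos : (0:ℝ) < (1 + ‖x - t • l k - yI k‖^2) ^ ((δ-3)/2) :=
      Real.rpow_pos_of_pos (hBpos k) _
    have hwbase_nn : (0:ℝ) ≤ (1 + ‖(lam k t)⁻¹ • (x - t • l k - y k t)‖^2) ^ ((δ-3)/2) :=
      (Real.rpow_pos_of_pos (by positivity) _).le
    have hLr3 : (lam k t) ^ (-(3:ℝ)) ≤ (Λmin/2) ^ (-(3:ℝ)) :=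
      Real.rpow_le_rpow_of_nonpos (by positivity) hL1 (by norm_num)
    have hLr4 : (lam k t) ^ (-(4:ℝ)) ≤ (Λmin/2) ^ (-(4:ℝ)) :=
      Real.rpow_le_rpow_of_nonpos (by positivity) hL1 (by norm_num)
    have hLr3pos : (0:ℝ) < (lam k t) ^ (-(3:ℝ)) := Real.rpow_pos_of_pos hLpos _
    have hLr4pos : (0:ℝ) < (lam k t) ^ (-(4:ℝ)) := Real.rpow_pos_of_pos hLpos _
    have hLinv : (lam k t)⁻¹ ≤ (Λmin/2)⁻¹ := inv_anti₀ (by positivity) hL1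
    have hss : s⁻¹ * s⁻¹ ≤ (2*Λmax) * (2*Λmax) * (t⁻¹ * t⁻¹) := by
      calc s⁻¹ * s⁻¹ ≤ (2*Λmax * t⁻¹) * (2*Λmax * t⁻¹) :=
          mul_le_mul hsinv hsinv hsinv_nn (by positivity)
        _ = (2*Λmax) * (2*Λmax) * (t⁻¹ * t⁻¹) := by ring
    -- K6 : the vkF bound
    have hvk_eq : vkF v lam y k t x = (lam k t) ^ (-(3:ℝ)) * v k s z := by
      rw [vkF, ← hs_def, ← hz_def]
    have hK6 : |vkF v lam y k t x| ≤
        Ev0 k * t⁻¹ * (1 + ‖x - t • l k - yI k‖ ^ 2) ^ ((δ-3)/2) := by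
      have e0 : |vkF v lam y k t x| = (lam k t) ^ (-(3:ℝ)) * |v k s z| := by
        rw [hvk_eq, abs_mul, abs_of_pos hLr3pos]
      rw [e0]
      calc (lam k t) ^ (-(3:ℝ)) * |v k s z|
          ≤ (Λmin/2) ^ (-(3:ℝ)) * (Cv0 k * s⁻¹ *
              (1 + ‖(lam k t)⁻¹ • (x - t • l k - y k t)‖^2) ^ ((δ-3)/2)) :=
            mul_le_mul hLr3 hv1 (abs_nonneg _) (by positivity)
        _ ≤ (Λmin/2) ^ (-(3:ℝ)) * (Cv0 k * (2*Λmax * t⁻¹) *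
              (Mv * (1 + ‖x - t • l k - yI k‖^2) ^ ((δ-3)/2))) := by
            apply mul_le_mul_of_nonneg_left _ (by positivity)
            apply mul_le_mul (mul_le_mul_of_nonneg_left hsinv (hCv0pos k).le) hMvB
              hwbase_nn (by positivity)
        _ = Ev0 k * t⁻¹ * (1 + ‖x - t • l k - yI k‖ ^ 2) ^ ((δ-3)/2) := by
            simp only [hEv0_def]
            ring
    -- K7 : derivative of the vkF part
    have hmem : (Set.Ici (1:ℝ) ×ˢ (Set.univ : Set E5)) ∈ 𝓝 ((s, z) : ℝ × E5) := by
      apply Filter.mem_of_superset ((isOpen_Ioi.prod isOpen_univ).mem_nhds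
        ⟨show s ∈ Set.Ioi (1:ℝ) from by simp only [Set.mem_Ioi]; linarith, Set.mem_univ z⟩)
      exact Set.prod_mono Set.Ioi_subset_Ici_self (subset_refl _)
    have hjoint : DifferentiableAt ℝ (fun p : ℝ × E5 => v k p.1 p.2) (s, z) :=
      ((hv k).contDiffAt hmem).differentiableAt (by simp)
    have hdz : DifferentiableAt ℝ (v k s) z :=
      hjoint.comp z (DifferentiableAt.prodMk (differentiableAt_const s) differentiableAt_id)
    have hfz : HasFDerivAt (v k s) (fderiv ℝ (v k s) z) ((lam k t)⁻¹ • (x - y k t)) := by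
      rw [← hz_def]; exact hdz.hasFDerivAt
    have hvfun_eq : (fun z' => vkF v lam y k t z')
        = fun z' => (lam k t) ^ (-(3:ℝ)) * v k s ((lam k t)⁻¹ • (z' - y k t)) := by
      funext z'; rw [vkF, ← hs_def]
    have hDvd : HasFDerivAt (fun z' => vkF v lam y k t z')
        (((lam k t) ^ (-(3:ℝ)) * (lam k t)⁻¹) • fderiv ℝ (v k s) z) x := by
      rw [hvfun_eq]
      exact hasFDerivAt_scaled ((lam k t) ^ (-(3:ℝ))) (lam k t)⁻¹ (y k t) x hfz
    have hK7 : ‖((lam k t) ^ (-(3:ℝ)) * (lam k t)⁻¹) • fderiv ℝ (v k s) z‖ ≤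
        Ev1 k * (t⁻¹ * t⁻¹) * (1 + ‖x - t • l k - yI k‖ ^ 2) ^ ((δ-3)/2) := by
      rw [norm_smul, Real.norm_eq_abs, abs_mul, abs_of_pos hLr3pos,
        abs_of_pos (inv_pos.mpr hLpos)]
      calc (lam k t) ^ (-(3:ℝ)) * (lam k t)⁻¹ * ‖fderiv ℝ (v k s) z‖
          ≤ ((Λmin/2) ^ (-(3:ℝ)) * (Λmin/2)⁻¹) * (Cv0 k * (s⁻¹ * s⁻¹) *
              (1 + ‖(lam k t)⁻¹ • (x - t • l k - y k t)‖^2) ^ ((δ-3)/2)) := by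
            apply mul_le_mul (mul_le_mul hLr3 hLinv (by positivity) (by positivity))
              hv2 (norm_nonneg _) (by positivity)
        _ ≤ ((Λmin/2) ^ (-(3:ℝ)) * (Λmin/2)⁻¹) * (Cv0 k *
              ((2*Λmax) * (2*Λmax) * (t⁻¹ * t⁻¹)) *
              (Mv * (1 + ‖x - t • l k - yI k‖^2) ^ ((δ-3)/2))) := by
            apply mul_le_mul_of_nonneg_left _ (by positivity)
            apply mul_le_mul (mul_le_mul_of_nonneg_left hss (hCv0pos k).le) hMvB
              hwbase_nn (by positivity)
        _ = Ev1 k * (t⁻¹ * t⁻¹) * (1 + ‖x - t • l k - yI k‖ ^ 2) ^ ((δ-3)/2) := by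
            simp only [hEv1_def]
            ring
    -- K8 : zkF bound
    have hzk_eq : zkF v lam y eps l k t x = (lam k t) ^ (-(4:ℝ)) * dt (v k) s z +
        (kappal (l k) * eps k / (2 * (lam k t) ^ ((1:ℝ)/2) * t^2)) *
          LamkWk lam y eps l k t x := by
      rw [zkF, ← hs_def, ← hz_def]
    have hLam : |LamkWk lam y eps l k t x| ≤
        (5/2) * CW k * (1 + ‖x - t • l k - yI k‖ ^ 2) ^ (-(3:ℝ)/2) := by
      rw [LamkWk, hDWd.fderiv]
      calc |3 / 2 * Wk lam y eps l k t x +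
            ((eps k * (lam k t) ^ (-(3:ℝ)/2) * (lam k t)⁻¹) •
              fderiv ℝ (Wl (l k)) ((lam k t)⁻¹ • (x - (t • l k + y k t))))
              (x - t • l k - y k t)|
          ≤ |3 / 2 * Wk lam y eps l k t x| +
            |((eps k * (lam k t) ^ (-(3:ℝ)/2) * (lam k t)⁻¹) •
              fderiv ℝ (Wl (l k)) ((lam k t)⁻¹ • (x - (t • l k + y k t))))
              (x - t • l k - y k t)| := abs_add_le _ _
        _ ≤ (3/2) * (CW k * (1 + ‖x - t • l k - yI k‖ ^ 2) ^ (-(3:ℝ)/2)) +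
            CW k * (1 + ‖x - t • l k - yI k‖ ^ 2) ^ (-(3:ℝ)/2) := by
            apply add_le_add _ hK5
            rw [abs_mul, show |(3:ℝ)/2| = 3/2 from by rw [abs_div]; norm_num]
            exact mul_le_mul_of_nonneg_left hK1 (by norm_num)
        _ = (5/2) * CW k * (1 + ‖x - t • l k - yI k‖ ^ 2) ^ (-(3:ℝ)/2) := by ring
    have hexp_mono : (1 + ‖x - t • l k - yI k‖ ^ 2) ^ (-(3:ℝ)/2)
        ≤ (1 + ‖x - t • l k - yI k‖ ^ 2) ^ ((δ-3)/2) := by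
      apply Real.rpow_le_rpow_of_exponent_le (hB1 k)
      have := hδ.1
      linarith
    have hden : (0:ℝ) < 2 * (lam k t) ^ ((1:ℝ)/2) * t^2 := by positivity
    have hLhalf : ((lam k t) ^ ((1:ℝ)/2))⁻¹ ≤ (Λmin/2) ^ (-(1:ℝ)/2) := by
      rw [show (-(1:ℝ)/2) = -((1:ℝ)/2) by ring, Real.rpow_neg (by positivity)]
      apply inv_anti₀ (Real.rpow_pos_of_pos (by positivity) _)
      exact Real.rpow_le_rpow (by positivity) hL1 (by norm_num)
    have hcoef : |kappal (l k) * eps k / (2 * (lam k t) ^ ((1:ℝ)/2) * t^2)|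
        ≤ |kappal (l k)| * (Λmin/2) ^ (-(1:ℝ)/2) / 2 * (t⁻¹ * t⁻¹) := by
      rw [abs_div, abs_mul, hepsabs k, mul_one, abs_of_pos hden]
      have he2 : |kappal (l k)| * (Λmin/2) ^ (-(1:ℝ)/2) / 2 * (t⁻¹ * t⁻¹)
          = |kappal (l k)| * ((Λmin/2) ^ (-(1:ℝ)/2) / (2 * t^2)) := by
        rw [← mul_inv, ← sq, ← div_eq_mul_inv, ← div_div]
        ring
      rw [he2, div_le_iff₀ hden]
      have he3 : |kappal (l k)| * ((Λmin/2) ^ (-(1:ℝ)/2) / (2 * t^2)) *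
          (2 * (lam k t) ^ ((1:ℝ)/2) * t^2)
          = |kappal (l k)| * ((Λmin/2) ^ (-(1:ℝ)/2) * (lam k t) ^ ((1:ℝ)/2)) := by
        field_simp
      rw [he3]
      have he4 : (1:ℝ) ≤ (Λmin/2) ^ (-(1:ℝ)/2) * (lam k t) ^ ((1:ℝ)/2) := by
        have h7 : ((lam k t) ^ ((1:ℝ)/2))⁻¹ * (lam k t) ^ ((1:ℝ)/2) = 1 :=
          inv_mul_cancel₀ (Real.rpow_pos_of_pos hLpos _).ne'
        calc (1:ℝ) = ((lam k t) ^ ((1:ℝ)/2))⁻¹ * (lam k t) ^ ((1:ℝ)/2) := h7.symm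
          _ ≤ (Λmin/2) ^ (-(1:ℝ)/2) * (lam k t) ^ ((1:ℝ)/2) :=
            mul_le_mul_of_nonneg_right hLhalf (Real.rpow_pos_of_pos hLpos _).le
      calc |kappal (l k)| = |kappal (l k)| * 1 := (mul_one _).symm
        _ ≤ |kappal (l k)| * ((Λmin/2) ^ (-(1:ℝ)/2) * (lam k t) ^ ((1:ℝ)/2)) :=
          mul_le_mul_of_nonneg_left he4 (abs_nonneg _)
    have hK8 : |zkF v lam y eps l k t x| ≤
        Ez k * (t⁻¹ * t⁻¹) * (1 + ‖x - t • l k - yI k‖ ^ 2) ^ ((δ-3)/2) := by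
      rw [hzk_eq]
      have hterm1 : |(lam k t) ^ (-(4:ℝ)) * dt (v k) s z| ≤
          (Λmin/2) ^ (-(4:ℝ)) * (Cv1 k + Cv0 k) * ((2*Λmax) * (2*Λmax)) * Mv *
            (t⁻¹ * t⁻¹) * (1 + ‖x - t • l k - yI k‖ ^ 2) ^ ((δ-3)/2) := by
        rw [abs_mul, abs_of_pos hLr4pos]
        calc (lam k t) ^ (-(4:ℝ)) * |dt (v k) s z|
            ≤ (Λmin/2) ^ (-(4:ℝ)) * ((Cv1 k + Cv0 k) * (s⁻¹ * s⁻¹) *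
                (1 + ‖(lam k t)⁻¹ • (x - t • l k - y k t)‖^2) ^ ((δ-3)/2)) :=
              mul_le_mul hLr4 hv3 (abs_nonneg _) (by positivity)
          _ ≤ (Λmin/2) ^ (-(4:ℝ)) * ((Cv1 k + Cv0 k) *
                ((2*Λmax) * (2*Λmax) * (t⁻¹ * t⁻¹)) *
                (Mv * (1 + ‖x - t • l k - yI k‖^2) ^ ((δ-3)/2))) := by
              apply mul_le_mul_of_nonneg_left _ (by positivity)
              apply mul_le_mul (mul_le_mul_of_nonneg_left hss
                (by positivity : (0:ℝ) ≤ Cv1 k + Cv0 k)) hMvB hwbase_nn (by positivity)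
          _ = (Λmin/2) ^ (-(4:ℝ)) * (Cv1 k + Cv0 k) * ((2*Λmax) * (2*Λmax)) * Mv *
                (t⁻¹ * t⁻¹) * (1 + ‖x - t • l k - yI k‖ ^ 2) ^ ((δ-3)/2) := by ring
      have hterm2 : |(kappal (l k) * eps k / (2 * (lam k t) ^ ((1:ℝ)/2) * t^2)) *
            LamkWk lam y eps l k t x| ≤
          |kappal (l k)| * (Λmin/2) ^ (-(1:ℝ)/2) / 2 * ((5/2) * CW k) *
            (t⁻¹ * t⁻¹) * (1 + ‖x - t • l k - yI k‖ ^ 2) ^ ((δ-3)/2) := by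
        rw [abs_mul]
        calc |kappal (l k) * eps k / (2 * (lam k t) ^ ((1:ℝ)/2) * t^2)| *
              |LamkWk lam y eps l k t x|
            ≤ (|kappal (l k)| * (Λmin/2) ^ (-(1:ℝ)/2) / 2 * (t⁻¹ * t⁻¹)) *
              ((5/2) * CW k * (1 + ‖x - t • l k - yI k‖ ^ 2) ^ ((δ-3)/2)) := by
              apply mul_le_mul hcoef (hLam.trans _) (abs_nonneg _) (by positivity)
              exact mul_le_mul_of_nonneg_left hexp_mono (by positivity)
          _ = |kappal (l k)| * (Λmin/2) ^ (-(1:ℝ)/2) / 2 * ((5/2) * CW k) *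
              (t⁻¹ * t⁻¹) * (1 + ‖x - t • l k - yI k‖ ^ 2) ^ ((δ-3)/2) := by ring
      calc |(lam k t) ^ (-(4:ℝ)) * dt (v k) s z +
            (kappal (l k) * eps k / (2 * (lam k t) ^ ((1:ℝ)/2) * t^2)) *
              LamkWk lam y eps l k t x|
          ≤ |(lam k t) ^ (-(4:ℝ)) * dt (v k) s z| +
            |(kappal (l k) * eps k / (2 * (lam k t) ^ ((1:ℝ)/2) * t^2)) *
              LamkWk lam y eps l k t x| := abs_add_le _ _
        _ ≤ Ez k * (t⁻¹ * t⁻¹) * (1 + ‖x - t • l k - yI k‖ ^ 2) ^ ((δ-3)/2) := by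
            have := add_le_add hterm1 hterm2
            refine this.trans (le_of_eq ?_)
            simp only [hEz_def]
            ring
    have hK4 : ‖(eps k * (lam k t) ^ (-(3:ℝ)/2) * (lam k t)⁻¹) •
        fderiv ℝ (Wl (l k)) ((lam k t)⁻¹ • (x - (t • l k + y k t)))‖ ≤
        CW k * (1 + ‖x - t • l k - yI k‖ ^ 2) ^ (-(2:ℝ)) := w3
    exact ⟨_, _, hDWd, hDvd, hK1, hK4, hK5, hK6, hK7, hK8⟩
  choose DW Dv hDWd hDvd hK1 hK4 hK5 hK6 hK7 hK8 using key
  have hQnn : (0:ℝ) ≤ qsum l yI t x := hQpos.le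
  have hQ3nn : (0:ℝ) ≤ qsum l yI t x ^ 3 := pow_nonneg hQnn 3
  have hQ4nn : (0:ℝ) ≤ qsum l yI t x ^ 4 := pow_nonneg hQnn 4
  have hQdnn : (0:ℝ) ≤ qsum l yI t x ^ ((3:ℝ) - δ) := Real.rpow_nonneg hQnn _
  have htinn : (0:ℝ) ≤ t⁻¹ := inv_nonneg.mpr htpos.le
  have hX1 : (0:ℝ) ≤ t⁻¹ * qsum l yI t x ^ ((3:ℝ) - δ) := mul_nonneg htinn hQdnn
  have ht2nn : (0:ℝ) ≤ t ^ (-(2:ℝ)) := by rw [← ht2]; exact mul_nonneg htinn htinn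
  have hX2 : (0:ℝ) ≤ t ^ (-(2:ℝ)) * qsum l yI t x ^ ((3:ℝ) - δ) := mul_nonneg ht2nn hQdnn
  refine ⟨?_, ?_, ?_⟩
  · -- the bW bound
    have hterm : ∀ k : Fin K, |Wk lam y eps l k t x + ck lamI eps l k * vkF v lam y k t x|
        ≤ G k * (qsum l yI t x ^ 3 + t⁻¹ * qsum l yI t x ^ ((3:ℝ) - δ)) := by
      intro k
      obtain ⟨g1, g2, -, -⟩ := hGdom k
      have h1 : |Wk lam y eps l k t x| ≤ CW k * qsum l yI t x ^ 3 :=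
        (hK1 k).trans (mul_le_mul_of_nonneg_left (conv1 k) (hCWpos k).le)
      have h2 : |ck lamI eps l k * vkF v lam y k t x|
          ≤ (|ck lamI eps l k| * Ev0 k) * (t⁻¹ * qsum l yI t x ^ ((3:ℝ) - δ)) := by
        rw [abs_mul]
        calc |ck lamI eps l k| * |vkF v lam y k t x|
            ≤ |ck lamI eps l k| *
                (Ev0 k * t⁻¹ * (1 + ‖x - t • l k - yI k‖ ^ 2) ^ ((δ-3)/2)) :=
              mul_le_mul_of_nonneg_left (hK6 k) (abs_nonneg _)
          _ ≤ |ck lamI eps l k| * (Ev0 k * t⁻¹ * qsum l yI t x ^ ((3:ℝ) - δ)) := by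
              apply mul_le_mul_of_nonneg_left _ (abs_nonneg _)
              apply mul_le_mul_of_nonneg_left (conv3 k)
              exact mul_nonneg (hEv0pos k).le htinn
          _ = (|ck lamI eps l k| * Ev0 k) * (t⁻¹ * qsum l yI t x ^ ((3:ℝ) - δ)) := by ring
      calc |Wk lam y eps l k t x + ck lamI eps l k * vkF v lam y k t x|
          ≤ |Wk lam y eps l k t x| + |ck lamI eps l k * vkF v lam y k t x| := abs_add_le _ _
        _ ≤ CW k * qsum l yI t x ^ 3
            + (|ck lamI eps l k| * Ev0 k) * (t⁻¹ * qsum l yI t x ^ ((3:ℝ) - δ)) :=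
            add_le_add h1 h2
        _ ≤ G k * qsum l yI t x ^ 3 + G k * (t⁻¹ * qsum l yI t x ^ ((3:ℝ) - δ)) :=
            add_le_add (mul_le_mul_of_nonneg_right g1 hQ3nn)
              (mul_le_mul_of_nonneg_right g2 hX1)
        _ = G k * (qsum l yI t x ^ 3 + t⁻¹ * qsum l yI t x ^ ((3:ℝ) - δ)) := by ring
    calc |bW lamI v lam y eps l t x|
        ≤ ∑ k, |Wk lam y eps l k t x + ck lamI eps l k * vkF v lam y k t x| := by
          rw [bW]; exact Finset.abs_sum_le_sum_abs _ _
      _ ≤ ∑ k, G k * (qsum l yI t x ^ 3 + t⁻¹ * qsum l yI t x ^ ((3:ℝ) - δ)) :=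
          Finset.sum_le_sum (fun k _ => hterm k)
      _ = (∑ k, G k) * (qsum l yI t x ^ 3 + t⁻¹ * qsum l yI t x ^ ((3:ℝ) - δ)) := by
          rw [Finset.sum_mul]
      _ ≤ (1 + ∑ k, G k) * (qsum l yI t x ^ 3 + t⁻¹ * qsum l yI t x ^ ((3:ℝ) - δ)) :=
          mul_le_mul_of_nonneg_right (by linarith) (by linarith)
  · -- the bX bound
    have hterm : ∀ k : Fin K,
        |-(fderiv ℝ (fun z => Wk lam y eps l k t z) x (l k))
          + ck lamI eps l k * zkF v lam y eps l k t x|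
        ≤ G k * (qsum l yI t x ^ 4 + t ^ (-(2:ℝ)) * qsum l yI t x ^ ((3:ℝ) - δ)) := by
      intro k
      obtain ⟨g1, -, -, g4⟩ := hGdom k
      have g5 : |ck lamI eps l k| * Ez k ≤ G k := by
        have h0 : 0 ≤ |ck lamI eps l k| * Ev1 k := mul_nonneg (abs_nonneg _) (hEv1pos k).le
        linarith
      have hf : |fderiv ℝ (fun z => Wk lam y eps l k t z) x (l k)|
          ≤ CW k * qsum l yI t x ^ 4 := by
        rw [(hDWd k).fderiv]
        calc |DW k (l k)| ≤ ‖DW k‖ * ‖l k‖ := (DW k).le_opNorm _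
          _ ≤ ‖DW k‖ * 1 := mul_le_mul_of_nonneg_left (hl k).le (norm_nonneg _)
          _ = ‖DW k‖ := mul_one _
          _ ≤ CW k * (1 + ‖x - t • l k - yI k‖ ^ 2) ^ (-(2:ℝ)) := hK4 k
          _ ≤ CW k * qsum l yI t x ^ 4 :=
            mul_le_mul_of_nonneg_left (conv2 k) (hCWpos k).le
      have hz : |ck lamI eps l k * zkF v lam y eps l k t x|
          ≤ (|ck lamI eps l k| * Ez k) * (t ^ (-(2:ℝ)) * qsum l yI t x ^ ((3:ℝ) - δ)) := by
        rw [abs_mul]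
        calc |ck lamI eps l k| * |zkF v lam y eps l k t x|
            ≤ |ck lamI eps l k| *
                (Ez k * (t⁻¹ * t⁻¹) * (1 + ‖x - t • l k - yI k‖ ^ 2) ^ ((δ-3)/2)) :=
              mul_le_mul_of_nonneg_left (hK8 k) (abs_nonneg _)
          _ ≤ |ck lamI eps l k| * (Ez k * (t⁻¹ * t⁻¹) * qsum l yI t x ^ ((3:ℝ) - δ)) := by
              apply mul_le_mul_of_nonneg_left _ (abs_nonneg _)
              apply mul_le_mul_of_nonneg_left (conv3 k)
              exact mul_nonneg (hEznn k) (mul_nonneg htinn htinn)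
          _ = (|ck lamI eps l k| * Ez k) * ((t⁻¹ * t⁻¹) * qsum l yI t x ^ ((3:ℝ) - δ)) := by
              ring
          _ = (|ck lamI eps l k| * Ez k) * (t ^ (-(2:ℝ)) * qsum l yI t x ^ ((3:ℝ) - δ)) := by
              rw [ht2]
      calc |-(fderiv ℝ (fun z => Wk lam y eps l k t z) x (l k))
            + ck lamI eps l k * zkF v lam y eps l k t x|
          ≤ |-(fderiv ℝ (fun z => Wk lam y eps l k t z) x (l k))|
            + |ck lamI eps l k * zkF v lam y eps l k t x| := abs_add_le _ _
        _ = |fderiv ℝ (fun z => Wk lam y eps l k t z) x (l k)|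
            + |ck lamI eps l k * zkF v lam y eps l k t x| := by rw [abs_neg]
        _ ≤ CW k * qsum l yI t x ^ 4
            + (|ck lamI eps l k| * Ez k) * (t ^ (-(2:ℝ)) * qsum l yI t x ^ ((3:ℝ) - δ)) :=
            add_le_add hf hz
        _ ≤ G k * qsum l yI t x ^ 4
            + G k * (t ^ (-(2:ℝ)) * qsum l yI t x ^ ((3:ℝ) - δ)) :=
            add_le_add (mul_le_mul_of_nonneg_right g1 hQ4nn)
              (mul_le_mul_of_nonneg_right g5 hX2)
        _ = G k * (qsum l yI t x ^ 4 + t ^ (-(2:ℝ)) * qsum l yI t x ^ ((3:ℝ) - δ)) := by ring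
    calc |bX lamI v lam y eps l t x|
        ≤ ∑ k, |-(fderiv ℝ (fun z => Wk lam y eps l k t z) x (l k))
            + ck lamI eps l k * zkF v lam y eps l k t x| := by
          rw [bX]; exact Finset.abs_sum_le_sum_abs _ _
      _ ≤ ∑ k, G k * (qsum l yI t x ^ 4 + t ^ (-(2:ℝ)) * qsum l yI t x ^ ((3:ℝ) - δ)) :=
          Finset.sum_le_sum (fun k _ => hterm k)
      _ = (∑ k, G k) * (qsum l yI t x ^ 4 + t ^ (-(2:ℝ)) * qsum l yI t x ^ ((3:ℝ) - δ)) := by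
          rw [Finset.sum_mul]
      _ ≤ (1 + ∑ k, G k) * (qsum l yI t x ^ 4 + t ^ (-(2:ℝ)) * qsum l yI t x ^ ((3:ℝ) - δ)) :=
          mul_le_mul_of_nonneg_right (by linarith) (by linarith)
  · -- the gradient/X bound
    have hsum_fd : HasFDerivAt (fun z => bW lamI v lam y eps l t z)
        (∑ k, (DW k + ck lamI eps l k • Dv k)) x := by
      have he : (fun z => bW lamI v lam y eps l t z)
          = fun z => ∑ k, (Wk lam y eps l k t z + ck lamI eps l k * vkF v lam y k t z) := by
        funext z; rw [bW]
      rw [he]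
      exact HasFDerivAt.fun_sum (fun k _ => (hDWd k).add ((hDvd k).const_mul _))
    have hgrad_eq : gradient (fun z => bW lamI v lam y eps l t z) x
        - ∑ k, gradient (fun z => Wk lam y eps l k t z) x
        = (InnerProductSpace.toDual ℝ E5).symm (∑ k, ck lamI eps l k • Dv k) := by
      have e1 : gradient (fun z => bW lamI v lam y eps l t z) x
          = (InnerProductSpace.toDual ℝ E5).symm (∑ k, (DW k + ck lamI eps l k • Dv k)) := by
        rw [gradient, hsum_fd.fderiv]
      have e2 : (∑ k, gradient (fun z => Wk lam y eps l k t z) x)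
          = (InnerProductSpace.toDual ℝ E5).symm (∑ k, DW k) := by
        rw [map_sum]
        exact Finset.sum_congr rfl (fun k _ => by rw [gradient, (hDWd k).fderiv])
      rw [e1, e2, ← map_sub]
      congr 1
      rw [Finset.sum_add_distrib]
      abel
    have hnorm1 : ‖gradient (fun z => bW lamI v lam y eps l t z) x
        - ∑ k, gradient (fun z => Wk lam y eps l k t z) x‖
        ≤ ∑ k, |ck lamI eps l k| * ‖Dv k‖ := by
      rw [hgrad_eq, LinearIsometryEquiv.norm_map]
      refine (norm_sum_le _ _).trans (Finset.sum_le_sum fun k _ => ?_)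
      rw [norm_smul, Real.norm_eq_abs]
    have hbx_eq : bX lamI v lam y eps l t x
        + ∑ k, fderiv ℝ (fun z => Wk lam y eps l k t z) x (l k)
        = ∑ k, ck lamI eps l k * zkF v lam y eps l k t x := by
      rw [bX, ← Finset.sum_add_distrib]
      exact Finset.sum_congr rfl (fun k _ => by ring)
    have hnorm2 : |bX lamI v lam y eps l t x
        + ∑ k, fderiv ℝ (fun z => Wk lam y eps l k t z) x (l k)|
        ≤ ∑ k, |ck lamI eps l k| * |zkF v lam y eps l k t x| := by
      rw [hbx_eq]
      refine (Finset.abs_sum_le_sum_abs _ _).trans (Finset.sum_le_sum fun k _ => ?_)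
      rw [abs_mul]
    have hper : ∀ k : Fin K,
        |ck lamI eps l k| * ‖Dv k‖ + |ck lamI eps l k| * |zkF v lam y eps l k t x|
        ≤ G k * (t ^ (-(2:ℝ)) * qsum l yI t x ^ ((3:ℝ) - δ)) := by
      intro k
      obtain ⟨-, -, -, g4⟩ := hGdom k
      have h1 : ‖Dv k‖ ≤ Ev1 k * (t ^ (-(2:ℝ)) * qsum l yI t x ^ ((3:ℝ) - δ)) := by
        refine (hK7 k).trans ?_
        calc Ev1 k * (t⁻¹ * t⁻¹) * (1 + ‖x - t • l k - yI k‖ ^ 2) ^ ((δ-3)/2)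
            ≤ Ev1 k * (t⁻¹ * t⁻¹) * qsum l yI t x ^ ((3:ℝ) - δ) := by
              apply mul_le_mul_of_nonneg_left (conv3 k)
              exact mul_nonneg (hEv1pos k).le (mul_nonneg htinn htinn)
          _ = Ev1 k * ((t⁻¹ * t⁻¹) * qsum l yI t x ^ ((3:ℝ) - δ)) := by ring
          _ = Ev1 k * (t ^ (-(2:ℝ)) * qsum l yI t x ^ ((3:ℝ) - δ)) := by rw [ht2]
      have h2 : |zkF v lam y eps l k t x|
          ≤ Ez k * (t ^ (-(2:ℝ)) * qsum l yI t x ^ ((3:ℝ) - δ)) := by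
        refine (hK8 k).trans ?_
        calc Ez k * (t⁻¹ * t⁻¹) * (1 + ‖x - t • l k - yI k‖ ^ 2) ^ ((δ-3)/2)
            ≤ Ez k * (t⁻¹ * t⁻¹) * qsum l yI t x ^ ((3:ℝ) - δ) := by
              apply mul_le_mul_of_nonneg_left (conv3 k)
              exact mul_nonneg (hEznn k) (mul_nonneg htinn htinn)
          _ = Ez k * ((t⁻¹ * t⁻¹) * qsum l yI t x ^ ((3:ℝ) - δ)) := by ring
          _ = Ez k * (t ^ (-(2:ℝ)) * qsum l yI t x ^ ((3:ℝ) - δ)) := by rw [ht2]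
      calc |ck lamI eps l k| * ‖Dv k‖ + |ck lamI eps l k| * |zkF v lam y eps l k t x|
          ≤ |ck lamI eps l k| * (Ev1 k * (t ^ (-(2:ℝ)) * qsum l yI t x ^ ((3:ℝ) - δ)))
            + |ck lamI eps l k| * (Ez k * (t ^ (-(2:ℝ)) * qsum l yI t x ^ ((3:ℝ) - δ))) :=
            add_le_add (mul_le_mul_of_nonneg_left h1 (abs_nonneg _))
              (mul_le_mul_of_nonneg_left h2 (abs_nonneg _))
        _ = (|ck lamI eps l k| * Ev1 k + |ck lamI eps l k| * Ez k) *
              (t ^ (-(2:ℝ)) * qsum l yI t x ^ ((3:ℝ) - δ)) := by ring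
        _ ≤ G k * (t ^ (-(2:ℝ)) * qsum l yI t x ^ ((3:ℝ) - δ)) :=
            mul_le_mul_of_nonneg_right g4 hX2
    calc ‖gradient (fun z => bW lamI v lam y eps l t z) x
          - ∑ k, gradient (fun z => Wk lam y eps l k t z) x‖
        + |bX lamI v lam y eps l t x
          + ∑ k, fderiv ℝ (fun z => Wk lam y eps l k t z) x (l k)|
        ≤ (∑ k, |ck lamI eps l k| * ‖Dv k‖)
          + ∑ k, |ck lamI eps l k| * |zkF v lam y eps l k t x| := add_le_add hnorm1 hnorm2
      _ = ∑ k, (|ck lamI eps l k| * ‖Dv k‖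
            + |ck lamI eps l k| * |zkF v lam y eps l k t x|) := by
          rw [← Finset.sum_add_distrib]
      _ ≤ ∑ k, G k * (t ^ (-(2:ℝ)) * qsum l yI t x ^ ((3:ℝ) - δ)) :=
          Finset.sum_le_sum (fun k _ => hper k)
      _ = (∑ k, G k) * (t ^ (-(2:ℝ)) * qsum l yI t x ^ ((3:ℝ) - δ)) := by
          rw [Finset.sum_mul]
      _ ≤ (1 + ∑ k, G k) * (t ^ (-(2:ℝ)) * qsum l yI t x ^ ((3:ℝ) - δ)) :=
          mul_le_mul_of_nonneg_right (by linarith) hX2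
      _ = (1 + ∑ k, G k) * t ^ (-(2:ℝ)) * qsum l yI t x ^ ((3:ℝ) - δ) := by ring
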